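/- arXiv:2605.10591 — 6 statements merged into one kernel-verified Lean document; each statement's English description precedes it below -/
import Mathlib

section
/- Let p, q ∈ 𝕜[t] be nonzero coprime polynomials with q monic. Then the identity p^{n3−2}·(q′·p − q·p′) = A3·q^{n3} + A2·q^{n2}·p^{n3−n2} + A1·q^{n1}·p^{n3−n1} holds in 𝕜[t] (this is the condition that x = q/p solves the generalized Abel equation x′ = A3(t)x^{n3} + A2(t)x^{n2} + A1(t)x^{n1}) if and only if q = 1 and p^{n3−2}·p′ + A3 + A2·p^{n3−n2} + A1·p^{n3−n1} = 0. -/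
open Polynomial

/-- Index set `{3, 2, 1, ∂}` for the terms of the generalized Abel equation. -/
inductive AbelIdx : Type
  | I1 : AbelIdx
  | I2 : AbelIdx
  | I3 : AbelIdx
  | D  : AbelIdx
  deriving DecidableEq

instance instFintypeAbelIdx : Fintype AbelIdx :=
  ⟨{AbelIdx.I1, AbelIdx.I2, AbelIdx.I3, AbelIdx.D}, fun x => by cases x <;> simp⟩

/-- `p` is a solution denominator: `p ≠ 0` and
`p^(n3-2)·p' + A3 + A2·p^(n3-n2) + A1·p^(n3-n1) = 0`, i.e. `x = 1/p` solves the
generalized Abel equation `x' = A3 x^{n3} + A2 x^{n2} + A1 x^{n1}`. -/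
def IsSolDen {𝕜 : Type*} [Field 𝕜] (n1 n2 n3 : ℕ) (A1 A2 A3 : Polynomial 𝕜)
    (p : Polynomial 𝕜) : Prop :=
  p ≠ 0 ∧
    p ^ (n3 - 2) * Polynomial.derivative p + A3 + A2 * p ^ (n3 - n2) + A1 * p ^ (n3 - n1) = 0

/-- `Φ_ℓ(r)` for `ℓ ∈ {1,2,3,∂}`. -/
def Phi (n1 n2 n3 a1 a2 a3 r : ℕ) : AbelIdx → ℤ
  | .I1 => (n1 : ℤ) * r - a1
  | .I2 => (n2 : ℤ) * r - a2
  | .I3 => (n3 : ℤ) * r - a3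
  | .D  => (r : ℤ) + 1

/-- `O_r`, the minimum of the four `Φ_ℓ(r)`. -/
def Omin (n1 n2 n3 a1 a2 a3 r : ℕ) : ℤ :=
  min (min (Phi n1 n2 n3 a1 a2 a3 r .I1) (Phi n1 n2 n3 a1 a2 a3 r .I2))
      (min (Phi n1 n2 n3 a1 a2 a3 r .I3) (Phi n1 n2 n3 a1 a2 a3 r .D))

/-- `T_r = {ℓ : Φ_ℓ(r) = O_r}`. -/
def Tie (n1 n2 n3 a1 a2 a3 r : ℕ) : Finset AbelIdx :=
  Finset.univ.filter fun ℓ => Phi n1 n2 n3 a1 a2 a3 r ℓ = Omin n1 n2 n3 a1 a2 a3 r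

/-- `r` is edge-admissible if `T_r` has at least two elements. -/
def EdgeAdmissible (n1 n2 n3 a1 a2 a3 r : ℕ) : Prop :=
  2 ≤ (Tie n1 n2 n3 a1 a2 a3 r).card

/-- The edge polynomial `P_r(C)`. -/
noncomputable def edgePoly {𝕜 : Type*} [Field 𝕜] (n1 n2 n3 : ℕ)
    (A1 A2 A3 : Polynomial 𝕜) (r : ℕ) : Polynomial 𝕜 :=
  (if AbelIdx.I1 ∈ Tie n1 n2 n3 A1.natDegree A2.natDegree A3.natDegree r then
      Polynomial.C A1.leadingCoeff * Polynomial.X ^ n1 else 0) +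
  (if AbelIdx.I2 ∈ Tie n1 n2 n3 A1.natDegree A2.natDegree A3.natDegree r then
      Polynomial.C A2.leadingCoeff * Polynomial.X ^ n2 else 0) +
  (if AbelIdx.I3 ∈ Tie n1 n2 n3 A1.natDegree A2.natDegree A3.natDegree r then
      Polynomial.C A3.leadingCoeff * Polynomial.X ^ n3 else 0) +
  (if AbelIdx.D ∈ Tie n1 n2 n3 A1.natDegree A2.natDegree A3.natDegree r then
      (r : Polynomial 𝕜) * Polynomial.X else 0)

/-- The set `Γ` of candidate denominator degrees. -/
def Gamma (n1 n2 n3 a1 a2 a3 : ℕ) : Set ℕ :=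
  {r | 0 < r ∧ ((n3 : ℤ) - n2) * r ≤ (a3 : ℤ) ∧
    (((n3 : ℤ) - n2) * r = (a3 : ℤ) - a2 ∨
     ((n3 : ℤ) - n1) * r = (a3 : ℤ) - a1 ∨
     ((n2 : ℤ) - n1) * r = (a2 : ℤ) - a1 ∨
     ((n3 : ℤ) - 1) * r = (a3 : ℤ) + 1 ∨
     ((n2 : ℤ) - 1) * r = (a2 : ℤ) + 1 ∨
     ((n1 : ℤ) - 1) * r = (a1 : ℤ) + 1)}

/-- The nondegeneracy hypothesis (ND). -/
def ND {𝕜 : Type*} [Field 𝕜] (n1 n2 n3 : ℕ) (A1 A2 A3 : Polynomial 𝕜) : Prop :=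
  ∀ r : ℕ, r ∈ Gamma n1 n2 n3 A1.natDegree A2.natDegree A3.natDegree →
    EdgeAdmissible n1 n2 n3 A1.natDegree A2.natDegree A3.natDegree r →
    ((∀ c : 𝕜, c ≠ 0 → (edgePoly n1 n2 n3 A1 A2 A3 r).IsRoot c →
        (Polynomial.derivative (edgePoly n1 n2 n3 A1 A2 A3 r)).eval c ≠ 0) ∧
     (AbelIdx.D ∈ Tie n1 n2 n3 A1.natDegree A2.natDegree A3.natDegree r →
        ∀ c : 𝕜, c ≠ 0 → (edgePoly n1 n2 n3 A1 A2 A3 r).IsRoot c →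
          ∀ m : ℕ, 1 ≤ m →
            (Polynomial.derivative (edgePoly n1 n2 n3 A1 A2 A3 r)).eval c + (m : 𝕜) ≠ 0) ∧
     (¬ ∃ c1 c2 ζ : 𝕜, c1 ≠ 0 ∧ c2 ≠ 0 ∧
        (edgePoly n1 n2 n3 A1 A2 A3 r).IsRoot c1 ∧
        (edgePoly n1 n2 n3 A1 A2 A3 r).IsRoot c2 ∧
        ζ ≠ 1 ∧ c1 = ζ * c2 ∧
        (ζ ^ (n3 - n2) = 1 ∨ ζ ^ (n3 - n1) = 1 ∨ ζ ^ (n3 - 1) = 1)))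

/-- The power-series form `E_r(y)` of the generalized Abel equation at infinity. -/
noncomputable def abelPS {𝕜 : Type*} [Field 𝕜] (n1 n2 n3 : ℕ)
    (A1 A2 A3 : Polynomial 𝕜) (r : ℕ) (y : PowerSeries 𝕜) : PowerSeries 𝕜 :=
  PowerSeries.X ^ (((r : ℤ) + 1 - Omin n1 n2 n3 A1.natDegree A2.natDegree A3.natDegree r).toNat) *
      ((r : PowerSeries 𝕜) * y + PowerSeries.X * PowerSeries.derivativeFun y) +
  PowerSeries.X ^ ((Phi n1 n2 n3 A1.natDegree A2.natDegree A3.natDegree r AbelIdx.I1 -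
      Omin n1 n2 n3 A1.natDegree A2.natDegree A3.natDegree r).toNat) *
      (A1.reverse : PowerSeries 𝕜) * y ^ n1 +
  PowerSeries.X ^ ((Phi n1 n2 n3 A1.natDegree A2.natDegree A3.natDegree r AbelIdx.I2 -
      Omin n1 n2 n3 A1.natDegree A2.natDegree A3.natDegree r).toNat) *
      (A2.reverse : PowerSeries 𝕜) * y ^ n2 +
  PowerSeries.X ^ ((Phi n1 n2 n3 A1.natDegree A2.natDegree A3.natDegree r AbelIdx.I3 -
      Omin n1 n2 n3 A1.natDegree A2.natDegree A3.natDegree r).toNat) *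
      (A3.reverse : PowerSeries 𝕜) * y ^ n3

/-- Proposition 2.1. For nonzero coprime `p, q` with `q` monic, the
identity expressing that `x = q/p` solves the generalized Abel equation holds iff
`q = 1` and `p^(n3-2)·p' + A3 + A2·p^(n3-n2) + A1·p^(n3-n1) = 0`. -/
theorem stmt0 {𝕜 : Type*} [RCLike 𝕜] (n1 n2 n3 : ℕ)
    (hn1 : 1 < n1) (hn12 : n1 < n2) (hn23 : n2 < n3)
    (A1 A2 A3 : Polynomial 𝕜) (hA1 : A1 ≠ 0) (hA2 : A2 ≠ 0) (hA3 : A3 ≠ 0)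
    (p q : Polynomial 𝕜) (hp : p ≠ 0) (hq : q ≠ 0) (hcop : IsCoprime p q)
    (hmon : q.Monic) :
    (p ^ (n3 - 2) * (Polynomial.derivative q * p - q * Polynomial.derivative p) =
        A3 * q ^ n3 + A2 * q ^ n2 * p ^ (n3 - n2) + A1 * q ^ n1 * p ^ (n3 - n1)) ↔
      (q = 1 ∧
        p ^ (n3 - 2) * Polynomial.derivative p + A3 + A2 * p ^ (n3 - n2) +
          A1 * p ^ (n3 - n1) = 0) := by
  constructor
  · intro h
    have hq1 : q = 1 := by
      have hdvd : q ∣ Polynomial.derivative q * p ^ (n3 - 1) := by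
        have h1 : q ∣ A3 * q ^ n3 + A2 * q ^ n2 * p ^ (n3 - n2) + A1 * q ^ n1 * p ^ (n3 - n1) := by
          refine dvd_add (dvd_add ?_ ?_) ?_
          · exact Dvd.dvd.mul_left (dvd_pow_self q (by omega)) A3
          · exact (Dvd.dvd.mul_left (dvd_pow_self q (by omega)) A2).mul_right _
          · exact (Dvd.dvd.mul_left (dvd_pow_self q (by omega)) A1).mul_right _
        have h2 : Polynomial.derivative q * p ^ (n3 - 1) =
            (A3 * q ^ n3 + A2 * q ^ n2 * p ^ (n3 - n2) + A1 * q ^ n1 * p ^ (n3 - n1)) +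
              q * (p ^ (n3 - 2) * Polynomial.derivative p) := by
          rw [← h]
          have : n3 - 1 = (n3 - 2) + 1 := by omega
          rw [this]; ring
        rw [h2]
        exact dvd_add h1 (dvd_mul_right q _)
      have hdq : q ∣ Polynomial.derivative q :=
        (hcop.symm.pow_right).dvd_of_dvd_mul_right hdvd
      have hnd : q.natDegree = 0 := by
        by_contra hnd
        have hne : Polynomial.derivative q ≠ 0 := fun h0 =>
          hnd (Polynomial.natDegree_eq_zero_of_derivative_eq_zero h0)
        have := Polynomial.natDegree_le_of_dvd hdq hne
        have := Polynomial.natDegree_derivative_lt hnd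
        omega
      have := Polynomial.eq_C_of_natDegree_eq_zero hnd
      rw [this]
      have : q.coeff 0 = 1 := by
        have := hmon.leadingCoeff
        rwa [Polynomial.leadingCoeff, hnd] at this
      rw [this, map_one]
    refine ⟨hq1, ?_⟩
    subst hq1
    simp only [Polynomial.derivative_one, one_pow, mul_one, one_mul, zero_mul] at h
    linear_combination -h
  · rintro ⟨hq1, heq⟩
    subst hq1
    simp only [Polynomial.derivative_one, one_pow, mul_one, one_mul, zero_mul]
    linear_combination -heq
end

section
/- The set {p ∈ 𝕜[t] : p ≠ 0 and p^{n3−2}·p′ + A3 + A2·p^{n3−n2} + A1·p^{n3−n1} = 0} of solution denominators is finite; equivalently, the generalized Abel equation x′ = A3(t)x^{n3} + A2(t)x^{n2} + A1(t)x^{n1} has only finitely many rational solutions of the form x = 1/p with p ∈ 𝕜[t]. -/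
open Polynomial

instance : Fintype AbelIdx where
  elems := {AbelIdx.I1, AbelIdx.I2, AbelIdx.I3, AbelIdx.D}
  complete := by intro x; cases x <;> simp

/-- Corollary 2.2. The set of solution denominators is finite, i.e.
the generalized Abel equation has only finitely many rational solutions `x = 1/p`. -/
theorem stmt1 {𝕜 : Type*} [RCLike 𝕜] (n1 n2 n3 : ℕ)
    (hn1 : 1 < n1) (hn12 : n1 < n2) (hn23 : n2 < n3)
    (A1 A2 A3 : Polynomial 𝕜) (hA1 : A1 ≠ 0) (hA2 : A2 ≠ 0) (hA3 : A3 ≠ 0) :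
    {p : Polynomial 𝕜 | IsSolDen n1 n2 n3 A1 A2 A3 p}.Finite := by
  classical
  haveI := Polynomial.fintypeSubtypeMonicDvd A3 hA3
  have hMD : {d : Polynomial 𝕜 | d.Monic ∧ d ∣ A3}.Finite := by
    exact Set.finite_coe_iff.mp
      (@Finite.of_fintype {g : Polynomial 𝕜 // g.Monic ∧ g ∣ A3}
        (Polynomial.fintypeSubtypeMonicDvd A3 hA3))
  set k := A3.natDegree with hk
  set Q : Polynomial 𝕜 → Polynomial 𝕜 := fun d =>
    C ((d ^ (n3 - 2) * derivative d).coeff k) * X ^ (n3 - 1) +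
    C ((A2 * d ^ (n3 - n2)).coeff k) * X ^ (n3 - n2) +
    C ((A1 * d ^ (n3 - n1)).coeff k) * X ^ (n3 - n1) + C A3.leadingCoeff with hQdef
  have hQ : ∀ d : Polynomial 𝕜, Q d ≠ 0 := by
    intro d hQ0
    have h0 : (Q d).coeff 0 = A3.leadingCoeff := by
      have e1 : ¬ (0 = n3 - 1) := by omega
      have e2 : ¬ (0 = n3 - n2) := by omega
      have e3 : ¬ (0 = n3 - n1) := by omega
      simp [hQdef, coeff_add, coeff_C_mul, coeff_X_pow, if_neg e1, if_neg e2, if_neg e3]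
    rw [hQ0] at h0
    simp only [coeff_zero] at h0
    exact hA3 (leadingCoeff_eq_zero.mp h0.symm)
  apply Set.Finite.subset
    (hMD.biUnion (fun d _ => ((finite_setOf_isRoot (hQ d)).image (fun c => C c * d))))
  intro p hp
  obtain ⟨hp0, heq⟩ := hp
  set c := p.leadingCoeff with hc
  have hc0 : c ≠ 0 := leadingCoeff_ne_zero.mpr hp0
  obtain ⟨d, hd⟩ : ∃ d : Polynomial 𝕜, d = C c⁻¹ * p := ⟨_, rfl⟩
  have hpd : p = C c * d := by
    rw [hd, ← mul_assoc, ← C_mul, mul_inv_cancel₀ hc0, C_1, one_mul]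
  have hdm : d.Monic := by
    unfold Polynomial.Monic
    rw [hd, leadingCoeff_mul, leadingCoeff_C, inv_mul_cancel₀ hc0]
  -- p divides A3
  have hpA3 : p ∣ A3 := by
    have hA3eq : A3 = -(p ^ (n3 - 2) * derivative p + A2 * p ^ (n3 - n2)
        + A1 * p ^ (n3 - n1)) := by linear_combination heq
    rw [hA3eq]
    rw [dvd_neg]
    refine dvd_add (dvd_add ?_ ?_) ?_
    · exact Dvd.dvd.mul_right (dvd_pow_self p (by omega)) _
    · exact Dvd.dvd.mul_left (dvd_pow_self p (by omega)) _
    · exact Dvd.dvd.mul_left (dvd_pow_self p (by omega)) _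
  have hdA3 : d ∣ A3 := dvd_trans ⟨C c, by rw [hpd]; ring⟩ hpA3
  -- the coefficient identity
  have hrw : C (c ^ (n3 - 1)) * (d ^ (n3 - 2) * derivative d) + A3 +
      C (c ^ (n3 - n2)) * (A2 * d ^ (n3 - n2)) +
      C (c ^ (n3 - n1)) * (A1 * d ^ (n3 - n1)) = 0 := by
    have hpow : c ^ (n3 - 1) = c ^ (n3 - 2) * c := by
      rw [← pow_succ]; congr 1; omega
    calc C (c ^ (n3 - 1)) * (d ^ (n3 - 2) * derivative d) + A3 +
        C (c ^ (n3 - n2)) * (A2 * d ^ (n3 - n2)) +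
        C (c ^ (n3 - n1)) * (A1 * d ^ (n3 - n1))
        = p ^ (n3 - 2) * derivative p + A3 + A2 * p ^ (n3 - n2) + A1 * p ^ (n3 - n1) := by
          rw [hpd, derivative_C_mul, hpow, mul_pow, mul_pow, mul_pow, ← C_pow, ← C_pow, ← C_pow, C_mul]
          ring
      _ = 0 := heq
  have hcoeff := congrArg (fun q : Polynomial 𝕜 => q.coeff k) hrw
  simp only [coeff_add, coeff_C_mul, coeff_zero] at hcoeff
  have hroot : (Q d).IsRoot c := by
    have hA3k : A3.coeff k = A3.leadingCoeff := rfl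
    simp only [IsRoot, hQdef, eval_add, eval_mul, eval_pow, eval_C, eval_X]
    rw [hA3k] at hcoeff
    linear_combination hcoeff
  exact Set.mem_biUnion (show d ∈ _ from ⟨hdm, hdA3⟩)
    ⟨c, hroot, hpd.symm⟩
end

section
/- Let r ≥ 1 be an integer and let y ∈ 𝕜⟦X⟧ be a formal power series with constant coefficient C ≠ 0 satisfying the power-series equation E_r(y): X^{(r+1)−O_r}·(r·y + X·y′) + Σ_{i=1}^{3} X^{Φ_i(r)−O_r}·rev(A_i)·y^{n_i} = 0 (the generalized Abel equation rewritten at infinity). Then r is edge-admissible and P_r(C) = 0, i.e. Σ_{i∈{1,2,3} with Φ_i(r)=O_r} α_i·C^{n_i} + (r·C if Φ_∂(r)=O_r, else 0) = 0. -/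
open Polynomial

/-- Lemma 3.4. If `y ∈ 𝕜⟦X⟧` with nonzero constant coefficient `C`
solves the power-series form `E_r(y)` of the Abel equation, then `r` is edge-admissible
and `P_r(C) = 0`. -/
theorem stmt2 {𝕜 : Type*} [RCLike 𝕜] (n1 n2 n3 : ℕ)
    (hn1 : 1 < n1) (hn12 : n1 < n2) (hn23 : n2 < n3)
    (A1 A2 A3 : Polynomial 𝕜) (hA1 : A1 ≠ 0) (hA2 : A2 ≠ 0) (hA3 : A3 ≠ 0)
    (r : ℕ) (hr : 1 ≤ r) (y : PowerSeries 𝕜) (C : 𝕜) (hC : C ≠ 0)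
    (hconst : PowerSeries.constantCoeff y = C)
    (hy : abelPS n1 n2 n3 A1 A2 A3 r y = 0) :
    EdgeAdmissible n1 n2 n3 A1.natDegree A2.natDegree A3.natDegree r ∧
      (edgePoly n1 n2 n3 A1 A2 A3 r).eval C = 0 := by
  classical
  set a1 := A1.natDegree with ha1
  set a2 := A2.natDegree with ha2
  set a3 := A3.natDegree with ha3
  set O := Omin n1 n2 n3 a1 a2 a3 r with hOdef
  have hmin : ∀ ℓ, O ≤ Phi n1 n2 n3 a1 a2 a3 r ℓ := by
    have h1 : O ≤ Phi n1 n2 n3 a1 a2 a3 r .I1 := (min_le_left _ _).trans (min_le_left _ _)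
    have h2 : O ≤ Phi n1 n2 n3 a1 a2 a3 r .I2 := (min_le_left _ _).trans (min_le_right _ _)
    have h3 : O ≤ Phi n1 n2 n3 a1 a2 a3 r .I3 := (min_le_right _ _).trans (min_le_left _ _)
    have h4 : O ≤ Phi n1 n2 n3 a1 a2 a3 r .D := (min_le_right _ _).trans (min_le_right _ _)
    intro ℓ; cases ℓ <;> assumption
  have hexists : ∃ ℓ, Phi n1 n2 n3 a1 a2 a3 r ℓ = O := by
    rcases min_cases (min (Phi n1 n2 n3 a1 a2 a3 r .I1) (Phi n1 n2 n3 a1 a2 a3 r .I2))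
        (min (Phi n1 n2 n3 a1 a2 a3 r .I3) (Phi n1 n2 n3 a1 a2 a3 r .D)) with ⟨h, _⟩ | ⟨h, _⟩ <;>
      [rcases min_cases (Phi n1 n2 n3 a1 a2 a3 r .I1) (Phi n1 n2 n3 a1 a2 a3 r .I2) with
        ⟨h', _⟩ | ⟨h', _⟩;
       rcases min_cases (Phi n1 n2 n3 a1 a2 a3 r .I3) (Phi n1 n2 n3 a1 a2 a3 r .D) with
        ⟨h', _⟩ | ⟨h', _⟩]
    · exact ⟨.I1, by rw [hOdef, Omin, h, h']⟩
    · exact ⟨.I2, by rw [hOdef, Omin, h, h']⟩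
    · exact ⟨.I3, by rw [hOdef, Omin, h, h']⟩
    · exact ⟨.D, by rw [hOdef, Omin, h, h']⟩
  have hk : ∀ ℓ, ((Phi n1 n2 n3 a1 a2 a3 r ℓ - O).toNat = 0) ↔
      Phi n1 n2 n3 a1 a2 a3 r ℓ = O := by
    intro ℓ; have := hmin ℓ; omega
  have hPD : Phi n1 n2 n3 a1 a2 a3 r .D = (r : ℤ) + 1 := rfl
  have key := congrArg (PowerSeries.constantCoeff) hy
  rw [abelPS] at key
  rw [show ((r : ℤ) + 1 - Omin n1 n2 n3 A1.natDegree A2.natDegree A3.natDegree r)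
      = Phi n1 n2 n3 a1 a2 a3 r .D - O by rw [hPD]] at key
  simp only [← ha1, ← ha2, ← ha3, ← hOdef, map_add, map_mul, map_pow, map_natCast,
    PowerSeries.constantCoeff_X, hconst, Polynomial.constantCoeff_coe,
    Polynomial.coeff_zero_reverse, map_zero, zero_mul, add_zero, zero_pow_eq, hk,
    ite_mul, one_mul] at key
  have hmem : ∀ ℓ, (ℓ ∈ Tie n1 n2 n3 a1 a2 a3 r) ↔ Phi n1 n2 n3 a1 a2 a3 r ℓ = O := by
    intro ℓ; simp [Tie, ← hOdef]
  have heval : (edgePoly n1 n2 n3 A1 A2 A3 r).eval C =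
      (if Phi n1 n2 n3 a1 a2 a3 r .D = O then (r : 𝕜) * C else 0) +
      (if Phi n1 n2 n3 a1 a2 a3 r .I1 = O then A1.leadingCoeff * C ^ n1 else 0) +
      (if Phi n1 n2 n3 a1 a2 a3 r .I2 = O then A2.leadingCoeff * C ^ n2 else 0) +
      (if Phi n1 n2 n3 a1 a2 a3 r .I3 = O then A3.leadingCoeff * C ^ n3 else 0) := by
    rw [edgePoly]
    simp only [← ha1, ← ha2, ← ha3, hmem, apply_ite (Polynomial.eval C), Polynomial.eval_add,
      Polynomial.eval_mul, Polynomial.eval_pow, Polynomial.eval_C, Polynomial.eval_X,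
      Polynomial.eval_zero, Polynomial.eval_natCast]
    ring
  have hkey0 : (edgePoly n1 n2 n3 A1 A2 A3 r).eval C = 0 := by
    rw [heval]; exact key
  refine ⟨?_, hkey0⟩
  by_contra hcard
  rw [EdgeAdmissible, not_le] at hcard
  obtain ⟨ℓ0, hℓ0⟩ := hexists
  have hℓ0m : ℓ0 ∈ Tie n1 n2 n3 a1 a2 a3 r := (hmem ℓ0).2 hℓ0
  have huniq : ∀ ℓ, ℓ ∈ Tie n1 n2 n3 a1 a2 a3 r → ℓ = ℓ0 := by
    intro ℓ hℓ
    exact Finset.card_le_one.mp (by omega) ℓ hℓ ℓ0 hℓ0m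
  have hother : ∀ ℓ, ℓ ≠ ℓ0 → ¬ (Phi n1 n2 n3 a1 a2 a3 r ℓ = O) := by
    intro ℓ hℓ h
    exact hℓ (huniq ℓ ((hmem ℓ).2 h))
  have hrC : (r : 𝕜) ≠ 0 := Nat.cast_ne_zero.mpr (by omega)
  cases ℓ0 with
  | I1 =>
    rw [heval, if_neg (hother .D (by simp)), if_pos hℓ0, if_neg (hother .I2 (by simp)),
      if_neg (hother .I3 (by simp))] at hkey0
    simp only [zero_add, add_zero] at hkey0
    exact (mul_ne_zero (Polynomial.leadingCoeff_ne_zero.mpr hA1) (pow_ne_zero _ hC)) hkey0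
  | I2 =>
    rw [heval, if_neg (hother .D (by simp)), if_neg (hother .I1 (by simp)), if_pos hℓ0,
      if_neg (hother .I3 (by simp))] at hkey0
    simp only [zero_add, add_zero] at hkey0
    exact (mul_ne_zero (Polynomial.leadingCoeff_ne_zero.mpr hA2) (pow_ne_zero _ hC)) hkey0
  | I3 =>
    rw [heval, if_neg (hother .D (by simp)), if_neg (hother .I1 (by simp)),
      if_neg (hother .I2 (by simp)), if_pos hℓ0] at hkey0
    simp only [zero_add, add_zero] at hkey0
    exact (mul_ne_zero (Polynomial.leadingCoeff_ne_zero.mpr hA3) (pow_ne_zero _ hC)) hkey0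
  | D =>
    rw [heval, if_pos hℓ0, if_neg (hother .I1 (by simp)), if_neg (hother .I2 (by simp)),
      if_neg (hother .I3 (by simp))] at hkey0
    simp only [zero_add, add_zero] at hkey0
    exact (mul_ne_zero hrC hC) hkey0
end

section
/- Let r ≥ 1 be an edge-admissible integer and assume that every nonzero root C ∈ 𝕜 of P_r satisfies P_r′(C) ≠ 0 and, if ∂ ∈ T_r, also P_r′(C) + m ≠ 0 for every integer m ≥ 1. Then the set of solution denominators p with deg p = r is finite, its cardinality is at most the number of distinct nonzero roots of P_r in 𝕜, and hence at most deg(P_r) − mult_0(P_r), where mult_0(P_r) denotes the multiplicity of 0 as a root of P_r. -/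
open Polynomial

lemma powDiff {𝕜 : Type*} [Field 𝕜] (p q : Polynomial 𝕜) (r d : ℕ)
    (hp : p.natDegree ≤ r) (hq : q.natDegree ≤ r)
    (hpq : (p - q).natDegree ≤ d) (hc : p.coeff r = q.coeff r) (k : ℕ) :
    (p ^ (k+1) - q ^ (k+1)).natDegree ≤ k * r + d ∧
      (p ^ (k+1) - q ^ (k+1)).coeff (k * r + d)
        = ((k+1 : ℕ) : 𝕜) * (p.coeff r) ^ k * ((p - q).coeff d) := by
  induction k with
  | zero =>
    constructor
    · simpa using hpq
    · simp
  | succ k ih =>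
    have key : p ^ (k+1+1) - q ^ (k+1+1)
        = p * (p ^ (k+1) - q ^ (k+1)) + (p - q) * q ^ (k+1) := by ring
    have hqk : (q ^ (k+1)).natDegree ≤ (k+1) * r := natDegree_pow_le_of_le _ hq
    have h1 : (p * (p ^ (k+1) - q ^ (k+1))).coeff (r + (k*r + d))
        = p.coeff r * ((p ^ (k+1) - q ^ (k+1)).coeff (k*r+d)) :=
      coeff_mul_add_eq_of_natDegree_le hp ih.1
    have h2 : ((p - q) * q ^ (k+1)).coeff (r + (k*r + d))
        = (p - q).coeff d * (q.coeff r) ^ (k+1) := by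
      rw [show r + (k*r+d) = d + (k+1)*r by ring]
      rw [coeff_mul_add_eq_of_natDegree_le hpq hqk, coeff_pow_of_natDegree_le hq]
    constructor
    · rw [key]
      refine (natDegree_add_le _ _).trans (max_le ?_ ?_)
      · refine natDegree_mul_le.trans ?_
        calc p.natDegree + (p ^ (k+1) - q ^ (k+1)).natDegree
            ≤ r + (k * r + d) := Nat.add_le_add hp ih.1
          _ = (k+1) * r + d := by ring
      · refine natDegree_mul_le.trans ?_
        calc (p - q).natDegree + (q ^ (k+1)).natDegree
            ≤ d + (k+1) * r := Nat.add_le_add hpq hqk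
          _ = (k+1) * r + d := by ring
    · rw [key, show (k+1) * r + d = r + (k*r + d) by ring, coeff_add, h1, h2, ih.2, hc]
      push_cast
      ring

lemma edgePoly_eq {𝕜 : Type*} [Field 𝕜] (n1 n2 n3 : ℕ) (A1 A2 A3 : Polynomial 𝕜) (r : ℕ) :
    edgePoly n1 n2 n3 A1 A2 A3 r =
      C (if AbelIdx.I1 ∈ Tie n1 n2 n3 A1.natDegree A2.natDegree A3.natDegree r
          then A1.leadingCoeff else 0) * X ^ n1 +
      C (if AbelIdx.I2 ∈ Tie n1 n2 n3 A1.natDegree A2.natDegree A3.natDegree r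
          then A2.leadingCoeff else 0) * X ^ n2 +
      C (if AbelIdx.I3 ∈ Tie n1 n2 n3 A1.natDegree A2.natDegree A3.natDegree r
          then A3.leadingCoeff else 0) * X ^ n3 +
      C ((if AbelIdx.D ∈ Tie n1 n2 n3 A1.natDegree A2.natDegree A3.natDegree r
          then (1:𝕜) else 0) * (r : 𝕜)) * X := by
  unfold edgePoly
  split_ifs <;> simp [map_natCast]

lemma keyS1 {𝕜 : Type*} [Field 𝕜] [CharZero 𝕜] (n1 n2 n3 : ℕ)
    (hn1 : 1 < n1) (hn12 : n1 < n2) (hn23 : n2 < n3)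
    (A1 A2 A3 : Polynomial 𝕜)
    (r : ℕ) (hr : 1 ≤ r) (p : Polynomial 𝕜)
    (heq : p ^ (n3 - 2) * derivative p + A3 + A2 * p ^ (n3 - n2) + A1 * p ^ (n3 - n1) = 0)
    (hdeg : p.natDegree = r) :
    (if AbelIdx.I1 ∈ Tie n1 n2 n3 A1.natDegree A2.natDegree A3.natDegree r
        then A1.leadingCoeff else 0) * p.leadingCoeff ^ (n3 - n1)
    + (if AbelIdx.I2 ∈ Tie n1 n2 n3 A1.natDegree A2.natDegree A3.natDegree r
        then A2.leadingCoeff else 0) * p.leadingCoeff ^ (n3 - n2)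
    + (if AbelIdx.I3 ∈ Tie n1 n2 n3 A1.natDegree A2.natDegree A3.natDegree r
        then A3.leadingCoeff else 0)
    + (if AbelIdx.D ∈ Tie n1 n2 n3 A1.natDegree A2.natDegree A3.natDegree r
        then (1:𝕜) else 0) * ((r : 𝕜) * p.leadingCoeff ^ (n3 - 1)) = 0 := by
  have hcr : p.coeff r = p.leadingCoeff := by rw [← hdeg]; rfl
  set c := p.leadingCoeff with hcdef
  -- O bounds
  have hO1 : Omin n1 n2 n3 A1.natDegree A2.natDegree A3.natDegree r ≤ (n1:ℤ)*r - A1.natDegree :=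
    le_trans (min_le_left _ _) (min_le_left _ _)
  have hO2 : Omin n1 n2 n3 A1.natDegree A2.natDegree A3.natDegree r ≤ (n2:ℤ)*r - A2.natDegree :=
    le_trans (min_le_left _ _) (min_le_right _ _)
  have hO3 : Omin n1 n2 n3 A1.natDegree A2.natDegree A3.natDegree r ≤ (n3:ℤ)*r - A3.natDegree :=
    le_trans (min_le_right _ _) (min_le_left _ _)
  have hOD : Omin n1 n2 n3 A1.natDegree A2.natDegree A3.natDegree r ≤ (r:ℤ) + 1 :=
    le_trans (min_le_right _ _) (min_le_right _ _)
  set O := Omin n1 n2 n3 A1.natDegree A2.natDegree A3.natDegree r with hOdef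
  have hT1 : (AbelIdx.I1 ∈ Tie n1 n2 n3 A1.natDegree A2.natDegree A3.natDegree r)
      ↔ ((n1:ℤ)*r - A1.natDegree = O) := by rw [Tie, Finset.mem_filter]; simp [Phi, hOdef]
  have hT2 : (AbelIdx.I2 ∈ Tie n1 n2 n3 A1.natDegree A2.natDegree A3.natDegree r)
      ↔ ((n2:ℤ)*r - A2.natDegree = O) := by rw [Tie, Finset.mem_filter]; simp [Phi, hOdef]
  have hT3 : (AbelIdx.I3 ∈ Tie n1 n2 n3 A1.natDegree A2.natDegree A3.natDegree r)
      ↔ ((n3:ℤ)*r - A3.natDegree = O) := by rw [Tie, Finset.mem_filter]; simp [Phi, hOdef]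
  have hTD : (AbelIdx.D ∈ Tie n1 n2 n3 A1.natDegree A2.natDegree A3.natDegree r)
      ↔ ((r:ℤ) + 1 = O) := by rw [Tie, Finset.mem_filter]; simp [Phi, hOdef]
  have h3z : (3:ℤ) ≤ (n3:ℤ) := by exact_mod_cast (by omega : 3 ≤ n3)
  have hrz : (1:ℤ) ≤ (r:ℤ) := by exact_mod_cast hr
  have hNnn : 0 ≤ (n3:ℤ)*r - O := by nlinarith [hOD]
  set N : ℕ := ((n3:ℤ)*r - O).toNat with hNdef
  have hN : (N:ℤ) = (n3:ℤ)*r - O := Int.toNat_of_nonneg hNnn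
  -- index casts
  have hidx1 : ((A1.natDegree + (n3-n1)*r : ℕ) : ℤ)
      = (n3:ℤ)*r - ((n1:ℤ)*r - A1.natDegree) := by
    push_cast [Nat.cast_sub (by omega : n1 ≤ n3)]; ring
  have hidx2 : ((A2.natDegree + (n3-n2)*r : ℕ) : ℤ)
      = (n3:ℤ)*r - ((n2:ℤ)*r - A2.natDegree) := by
    push_cast [Nat.cast_sub (by omega : n2 ≤ n3)]; ring
  have hidx3 : ((A3.natDegree : ℕ) : ℤ) = (n3:ℤ)*r - ((n3:ℤ)*r - A3.natDegree) := by ring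
  have hidxD : (((n3-2)*r + (r-1) : ℕ) : ℤ) = (n3:ℤ)*r - ((r:ℤ)+1) := by
    push_cast [Nat.cast_sub (by omega : 2 ≤ n3), Nat.cast_sub hr]; ring
  -- term values
  have hb1 : (A1 * p ^ (n3-n1)).natDegree ≤ A1.natDegree + (n3-n1)*r :=
    natDegree_mul_le.trans (add_le_add le_rfl (natDegree_pow_le_of_le _ hdeg.le))
  have hv1 : (A1 * p ^ (n3-n1)).coeff (A1.natDegree + (n3-n1)*r)
      = A1.leadingCoeff * c ^ (n3-n1) := by
    rw [coeff_mul_add_eq_of_natDegree_le le_rfl (natDegree_pow_le_of_le _ hdeg.le),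
      coeff_pow_of_natDegree_le hdeg.le, hcr, coeff_natDegree]
  have hb2 : (A2 * p ^ (n3-n2)).natDegree ≤ A2.natDegree + (n3-n2)*r :=
    natDegree_mul_le.trans (add_le_add le_rfl (natDegree_pow_le_of_le _ hdeg.le))
  have hv2 : (A2 * p ^ (n3-n2)).coeff (A2.natDegree + (n3-n2)*r)
      = A2.leadingCoeff * c ^ (n3-n2) := by
    rw [coeff_mul_add_eq_of_natDegree_le le_rfl (natDegree_pow_le_of_le _ hdeg.le),
      coeff_pow_of_natDegree_le hdeg.le, hcr, coeff_natDegree]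
  have hbD : (p ^ (n3-2) * derivative p).natDegree ≤ (n3-2)*r + (r-1) :=
    natDegree_mul_le.trans (add_le_add (natDegree_pow_le_of_le _ hdeg.le)
      ((natDegree_derivative_le p).trans (by omega)))
  have hvD : (p ^ (n3-2) * derivative p).coeff ((n3-2)*r + (r-1))
      = (r:𝕜) * c ^ (n3-1) := by
    rw [coeff_mul_add_eq_of_natDegree_le (natDegree_pow_le_of_le _ hdeg.le)
        ((natDegree_derivative_le p).trans (by omega)),
      coeff_pow_of_natDegree_le hdeg.le, coeff_derivative,
      show r - 1 + 1 = r by omega, hcr]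
    have h1 : ((r-1 : ℕ) : 𝕜) + 1 = (r:𝕜) := by
      push_cast [Nat.cast_sub hr]; ring
    rw [h1, show n3 - 1 = (n3-2) + 1 by omega, pow_succ]
    ring
  -- coefficient at N of each term
  have hcoe1 : (A1 * p ^ (n3-n1)).coeff N
      = (if AbelIdx.I1 ∈ Tie n1 n2 n3 A1.natDegree A2.natDegree A3.natDegree r
          then A1.leadingCoeff else 0) * c ^ (n3-n1) := by
    by_cases h : AbelIdx.I1 ∈ Tie n1 n2 n3 A1.natDegree A2.natDegree A3.natDegree r
    · have heqN : N = A1.natDegree + (n3-n1)*r := by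
        have : ((A1.natDegree + (n3-n1)*r : ℕ) : ℤ) = (N:ℤ) := by
          rw [hN, hidx1, hT1.mp h]
        exact_mod_cast this.symm
      rw [heqN, hv1, if_pos h]
    · have hOlt : O < (n1:ℤ)*r - A1.natDegree :=
        lt_of_le_of_ne hO1 (fun hh => h (hT1.mpr hh.symm))
      have hlt : (A1 * p ^ (n3-n1)).natDegree < N := by
        refine lt_of_le_of_lt hb1 ?_
        have : ((A1.natDegree + (n3-n1)*r : ℕ):ℤ) < (N:ℤ) := by rw [hN, hidx1]; omega
        exact_mod_cast this
      rw [coeff_eq_zero_of_natDegree_lt hlt, if_neg h, zero_mul]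
  have hcoe2 : (A2 * p ^ (n3-n2)).coeff N
      = (if AbelIdx.I2 ∈ Tie n1 n2 n3 A1.natDegree A2.natDegree A3.natDegree r
          then A2.leadingCoeff else 0) * c ^ (n3-n2) := by
    by_cases h : AbelIdx.I2 ∈ Tie n1 n2 n3 A1.natDegree A2.natDegree A3.natDegree r
    · have heqN : N = A2.natDegree + (n3-n2)*r := by
        have : ((A2.natDegree + (n3-n2)*r : ℕ) : ℤ) = (N:ℤ) := by
          rw [hN, hidx2, hT2.mp h]
        exact_mod_cast this.symm
      rw [heqN, hv2, if_pos h]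
    · have hOlt : O < (n2:ℤ)*r - A2.natDegree :=
        lt_of_le_of_ne hO2 (fun hh => h (hT2.mpr hh.symm))
      have hlt : (A2 * p ^ (n3-n2)).natDegree < N := by
        refine lt_of_le_of_lt hb2 ?_
        have : ((A2.natDegree + (n3-n2)*r : ℕ):ℤ) < (N:ℤ) := by rw [hN, hidx2]; omega
        exact_mod_cast this
      rw [coeff_eq_zero_of_natDegree_lt hlt, if_neg h, zero_mul]
  have hcoe3 : A3.coeff N
      = (if AbelIdx.I3 ∈ Tie n1 n2 n3 A1.natDegree A2.natDegree A3.natDegree r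
          then A3.leadingCoeff else 0) := by
    by_cases h : AbelIdx.I3 ∈ Tie n1 n2 n3 A1.natDegree A2.natDegree A3.natDegree r
    · have heqN : N = A3.natDegree := by
        have : ((A3.natDegree : ℕ) : ℤ) = (N:ℤ) := by rw [hN, hidx3, hT3.mp h]
        exact_mod_cast this.symm
      rw [heqN, coeff_natDegree, if_pos h]
    · have hOlt : O < (n3:ℤ)*r - A3.natDegree :=
        lt_of_le_of_ne hO3 (fun hh => h (hT3.mpr hh.symm))
      have hlt : A3.natDegree < N := by
        have : ((A3.natDegree : ℕ):ℤ) < (N:ℤ) := by rw [hN, hidx3]; omega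
        exact_mod_cast this
      rw [coeff_eq_zero_of_natDegree_lt hlt, if_neg h]
  have hcoeD : (p ^ (n3-2) * derivative p).coeff N
      = (if AbelIdx.D ∈ Tie n1 n2 n3 A1.natDegree A2.natDegree A3.natDegree r
          then (1:𝕜) else 0) * ((r:𝕜) * c ^ (n3-1)) := by
    by_cases h : AbelIdx.D ∈ Tie n1 n2 n3 A1.natDegree A2.natDegree A3.natDegree r
    · have heqN : N = (n3-2)*r + (r-1) := by
        have : (((n3-2)*r + (r-1) : ℕ) : ℤ) = (N:ℤ) := by rw [hN, hidxD, hTD.mp h]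
        exact_mod_cast this.symm
      rw [heqN, hvD, if_pos h, one_mul]
    · have hOlt : O < (r:ℤ) + 1 :=
        lt_of_le_of_ne hOD (fun hh => h (hTD.mpr hh.symm))
      have hlt : (p ^ (n3-2) * derivative p).natDegree < N := by
        refine lt_of_le_of_lt hbD ?_
        have : (((n3-2)*r + (r-1) : ℕ):ℤ) < (N:ℤ) := by rw [hN, hidxD]; omega
        exact_mod_cast this
      rw [coeff_eq_zero_of_natDegree_lt hlt, if_neg h, zero_mul]
  have h0 := congrArg (fun f => Polynomial.coeff f N) heq
  simp only [coeff_add, coeff_zero] at h0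
  rw [hcoeD, hcoe3, hcoe2, hcoe1] at h0
  linear_combination h0

lemma solden_root {𝕜 : Type*} [Field 𝕜] [CharZero 𝕜] (n1 n2 n3 : ℕ)
    (hn1 : 1 < n1) (hn12 : n1 < n2) (hn23 : n2 < n3)
    (A1 A2 A3 : Polynomial 𝕜)
    (r : ℕ) (hr : 1 ≤ r) (p : Polynomial 𝕜) (hp0 : p ≠ 0)
    (heq : p ^ (n3 - 2) * derivative p + A3 + A2 * p ^ (n3 - n2) + A1 * p ^ (n3 - n1) = 0)
    (hdeg : p.natDegree = r) :
    (edgePoly n1 n2 n3 A1 A2 A3 r).IsRoot (p.leadingCoeff)⁻¹ := by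
  have hS1 := keyS1 n1 n2 n3 hn1 hn12 hn23 A1 A2 A3 r hr p heq hdeg
  set c := p.leadingCoeff with hcdef
  have hc0 : c ≠ 0 := leadingCoeff_ne_zero.mpr hp0
  have hpow1 : c ^ n3 * (c⁻¹) ^ n1 = c ^ (n3 - n1) := by
    rw [inv_pow, show c ^ n3 = c ^ (n3-n1) * c ^ n1 by rw [← pow_add]; congr 1; omega,
      mul_assoc, mul_inv_cancel₀ (pow_ne_zero _ hc0), mul_one]
  have hpow2 : c ^ n3 * (c⁻¹) ^ n2 = c ^ (n3 - n2) := by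
    rw [inv_pow, show c ^ n3 = c ^ (n3-n2) * c ^ n2 by rw [← pow_add]; congr 1; omega,
      mul_assoc, mul_inv_cancel₀ (pow_ne_zero _ hc0), mul_one]
  have hpow3 : c ^ n3 * (c⁻¹) ^ n3 = 1 := by
    rw [inv_pow, mul_inv_cancel₀ (pow_ne_zero _ hc0)]
  have hpowD : c ^ n3 * c⁻¹ = c ^ (n3 - 1) := by
    rw [show c ^ n3 = c ^ (n3-1) * c by rw [← pow_succ]; congr 1; omega,
      mul_assoc, mul_inv_cancel₀ hc0, mul_one]
  rw [IsRoot, edgePoly_eq]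
  simp only [eval_add, eval_mul, eval_C, eval_pow, eval_X]
  have hkey : c ^ n3 *
      ((if AbelIdx.I1 ∈ Tie n1 n2 n3 A1.natDegree A2.natDegree A3.natDegree r
          then A1.leadingCoeff else 0) * (c⁻¹) ^ n1 +
       (if AbelIdx.I2 ∈ Tie n1 n2 n3 A1.natDegree A2.natDegree A3.natDegree r
          then A2.leadingCoeff else 0) * (c⁻¹) ^ n2 +
       (if AbelIdx.I3 ∈ Tie n1 n2 n3 A1.natDegree A2.natDegree A3.natDegree r
          then A3.leadingCoeff else 0) * (c⁻¹) ^ n3 +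
       (if AbelIdx.D ∈ Tie n1 n2 n3 A1.natDegree A2.natDegree A3.natDegree r
          then (1:𝕜) else 0) * (r:𝕜) * c⁻¹) = 0 := by
    linear_combination hS1
      + (if AbelIdx.I1 ∈ Tie n1 n2 n3 A1.natDegree A2.natDegree A3.natDegree r
          then A1.leadingCoeff else 0) * hpow1
      + (if AbelIdx.I2 ∈ Tie n1 n2 n3 A1.natDegree A2.natDegree A3.natDegree r
          then A2.leadingCoeff else 0) * hpow2
      + (if AbelIdx.I3 ∈ Tie n1 n2 n3 A1.natDegree A2.natDegree A3.natDegree r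
          then A3.leadingCoeff else 0) * hpow3
      + (if AbelIdx.D ∈ Tie n1 n2 n3 A1.natDegree A2.natDegree A3.natDegree r
          then (1:𝕜) else 0) * (r:𝕜) * hpowD
  exact (mul_eq_zero.mp hkey).resolve_left (pow_ne_zero _ hc0)

lemma solden_unique {𝕜 : Type*} [Field 𝕜] [CharZero 𝕜] (n1 n2 n3 : ℕ)
    (hn1 : 1 < n1) (hn12 : n1 < n2) (hn23 : n2 < n3)
    (A1 A2 A3 : Polynomial 𝕜)
    (r : ℕ) (hr : 1 ≤ r)
    (hnd1 : ∀ c : 𝕜, c ≠ 0 → (edgePoly n1 n2 n3 A1 A2 A3 r).IsRoot c →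
      (Polynomial.derivative (edgePoly n1 n2 n3 A1 A2 A3 r)).eval c ≠ 0)
    (hnd2 : AbelIdx.D ∈ Tie n1 n2 n3 A1.natDegree A2.natDegree A3.natDegree r →
      ∀ c : 𝕜, c ≠ 0 → (edgePoly n1 n2 n3 A1 A2 A3 r).IsRoot c →
        ∀ m : ℕ, 1 ≤ m →
          (Polynomial.derivative (edgePoly n1 n2 n3 A1 A2 A3 r)).eval c + (m : 𝕜) ≠ 0)
    (p q : Polynomial 𝕜) (hp0 : p ≠ 0) (hq0 : q ≠ 0)
    (heqp : p ^ (n3 - 2) * derivative p + A3 + A2 * p ^ (n3 - n2) + A1 * p ^ (n3 - n1) = 0)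
    (heqq : q ^ (n3 - 2) * derivative q + A3 + A2 * q ^ (n3 - n2) + A1 * q ^ (n3 - n1) = 0)
    (hdp : p.natDegree = r) (hdq : q.natDegree = r)
    (hlc : p.leadingCoeff = q.leadingCoeff) : p = q := by
  by_contra hne
  have hroot := solden_root n1 n2 n3 hn1 hn12 hn23 A1 A2 A3 r hr p hp0 heqp hdp
  have hS1p := keyS1 n1 n2 n3 hn1 hn12 hn23 A1 A2 A3 r hr p heqp hdp
  set c := p.leadingCoeff with hcdef
  have hc0 : c ≠ 0 := leadingCoeff_ne_zero.mpr hp0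
  have hcr : p.coeff r = c := by rw [hcdef, ← hdp]; rfl
  have hcrq : q.coeff r = c := by rw [hlc, ← hdq]; rfl
  have hcpq : p.coeff r = q.coeff r := by rw [hcr, hcrq]
  have hepq : p - q ≠ 0 := sub_ne_zero.mpr hne
  set d := (p - q).natDegree with hddef
  have hε : (p - q).coeff d ≠ 0 := by
    rw [hddef]; exact leadingCoeff_ne_zero.mpr hepq
  have hdlt : d < r := by
    have hdeg : p.degree = q.degree := by
      rw [degree_eq_natDegree hp0, degree_eq_natDegree hq0, hdp, hdq]
    have h1 := degree_sub_lt hdeg hp0 hlc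
    have h2 := natDegree_lt_natDegree hepq h1
    rw [hdp] at h2; exact hddef ▸ h2
  have hPD := fun k => powDiff p q r d hdp.le hdq.le hddef.ge hcpq k
  -- the subtracted equation
  have hE : (p^(n3-2) - q^(n3-2)) * derivative p + q^(n3-2) * derivative (p - q)
      + A2 * (p^(n3-n2) - q^(n3-n2)) + A1 * (p^(n3-n1) - q^(n3-n1)) = 0 := by
    rw [derivative_sub]; linear_combination heqp - heqq
  -- O bounds and tie iffs
  have hO1 : Omin n1 n2 n3 A1.natDegree A2.natDegree A3.natDegree r ≤ (n1:ℤ)*r - A1.natDegree :=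
    le_trans (min_le_left _ _) (min_le_left _ _)
  have hO2 : Omin n1 n2 n3 A1.natDegree A2.natDegree A3.natDegree r ≤ (n2:ℤ)*r - A2.natDegree :=
    le_trans (min_le_left _ _) (min_le_right _ _)
  have hOD : Omin n1 n2 n3 A1.natDegree A2.natDegree A3.natDegree r ≤ (r:ℤ) + 1 :=
    le_trans (min_le_right _ _) (min_le_right _ _)
  set O := Omin n1 n2 n3 A1.natDegree A2.natDegree A3.natDegree r with hOdef
  have hT1 : (AbelIdx.I1 ∈ Tie n1 n2 n3 A1.natDegree A2.natDegree A3.natDegree r)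
      ↔ ((n1:ℤ)*r - A1.natDegree = O) := by rw [Tie, Finset.mem_filter]; simp [Phi, hOdef]
  have hT2 : (AbelIdx.I2 ∈ Tie n1 n2 n3 A1.natDegree A2.natDegree A3.natDegree r)
      ↔ ((n2:ℤ)*r - A2.natDegree = O) := by rw [Tie, Finset.mem_filter]; simp [Phi, hOdef]
  have hTD : (AbelIdx.D ∈ Tie n1 n2 n3 A1.natDegree A2.natDegree A3.natDegree r)
      ↔ ((r:ℤ) + 1 = O) := by rw [Tie, Finset.mem_filter]; simp [Phi, hOdef]
  have h3z : (3:ℤ) ≤ (n3:ℤ) := by exact_mod_cast (by omega : 3 ≤ n3)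
  have hrz : (1:ℤ) ≤ (r:ℤ) := by exact_mod_cast hr
  have hdz : (d:ℤ) < (r:ℤ) := by exact_mod_cast hdlt
  have hNnn : 0 ≤ (n3:ℤ)*r - O - ((r:ℤ) - d) := by nlinarith [hOD]
  set N : ℕ := ((n3:ℤ)*r - O - ((r:ℤ) - d)).toNat with hNdef
  have hN : (N:ℤ) = (n3:ℤ)*r - O - ((r:ℤ) - d) := Int.toNat_of_nonneg hNnn
  -- index casts
  have hidx1 : ((A1.natDegree + ((n3-n1-1)*r + d) : ℕ) : ℤ)
      = (n3:ℤ)*r - ((n1:ℤ)*r - A1.natDegree) - ((r:ℤ) - d) := by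
    push_cast [show n3-n1-1 = n3-(n1+1) by omega, Nat.cast_sub (by omega : n1+1 ≤ n3)]; ring
  have hidx2 : ((A2.natDegree + ((n3-n2-1)*r + d) : ℕ) : ℤ)
      = (n3:ℤ)*r - ((n2:ℤ)*r - A2.natDegree) - ((r:ℤ) - d) := by
    push_cast [show n3-n2-1 = n3-(n2+1) by omega, Nat.cast_sub (by omega : n2+1 ≤ n3)]; ring
  have hidxD : ((((n3-3)*r + d) + (r-1) : ℕ) : ℤ)
      = (n3:ℤ)*r - ((r:ℤ)+1) - ((r:ℤ) - d) := by
    push_cast [Nat.cast_sub (by omega : 3 ≤ n3), Nat.cast_sub hr]; ring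
  -- term bounds and values
  have hb1 : (A1 * (p^(n3-n1) - q^(n3-n1))).natDegree ≤ A1.natDegree + ((n3-n1-1)*r + d) := by
    rw [show n3-n1 = (n3-n1-1)+1 by omega]
    exact natDegree_mul_le.trans (add_le_add le_rfl (hPD (n3-n1-1)).1)
  have hv1 : (A1 * (p^(n3-n1) - q^(n3-n1))).coeff (A1.natDegree + ((n3-n1-1)*r + d))
      = A1.leadingCoeff * (((n3-n1:ℕ):𝕜) * c^(n3-n1-1) * ((p-q).coeff d)) := by
    rw [show n3-n1 = (n3-n1-1)+1 by omega]
    simp only [Nat.add_sub_cancel]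
    rw [coeff_mul_add_eq_of_natDegree_le le_rfl (hPD (n3-n1-1)).1, (hPD (n3-n1-1)).2,
      coeff_natDegree, hcr]
  have hb2 : (A2 * (p^(n3-n2) - q^(n3-n2))).natDegree ≤ A2.natDegree + ((n3-n2-1)*r + d) := by
    rw [show n3-n2 = (n3-n2-1)+1 by omega]
    exact natDegree_mul_le.trans (add_le_add le_rfl (hPD (n3-n2-1)).1)
  have hv2 : (A2 * (p^(n3-n2) - q^(n3-n2))).coeff (A2.natDegree + ((n3-n2-1)*r + d))
      = A2.leadingCoeff * (((n3-n2:ℕ):𝕜) * c^(n3-n2-1) * ((p-q).coeff d)) := by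
    rw [show n3-n2 = (n3-n2-1)+1 by omega]
    simp only [Nat.add_sub_cancel]
    rw [coeff_mul_add_eq_of_natDegree_le le_rfl (hPD (n3-n2-1)).1, (hPD (n3-n2-1)).2,
      coeff_natDegree, hcr]
  have hbDa : ((p^(n3-2) - q^(n3-2)) * derivative p).natDegree ≤ ((n3-3)*r + d) + (r-1) := by
    rw [show n3-2 = (n3-3)+1 by omega]
    exact natDegree_mul_le.trans
      (add_le_add (hPD (n3-3)).1 ((natDegree_derivative_le p).trans (by omega)))
  have hvDa : ((p^(n3-2) - q^(n3-2)) * derivative p).coeff (((n3-3)*r + d) + (r-1))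
      = ((n3-2:ℕ):𝕜) * c^(n3-3) * ((p-q).coeff d) * ((r:𝕜) * c) := by
    rw [show n3-2 = (n3-3)+1 by omega]
    rw [coeff_mul_add_eq_of_natDegree_le (hPD (n3-3)).1 ((natDegree_derivative_le p).trans (by omega)),
      (hPD (n3-3)).2, coeff_derivative, show r-1+1 = r by omega, hcr]
    have h1 : ((r-1 : ℕ) : 𝕜) + 1 = (r:𝕜) := by push_cast [Nat.cast_sub hr]; ring
    rw [h1]
    ring
  have hbDb : (q^(n3-2) * derivative (p - q)).natDegree ≤ ((n3-3)*r + d) + (r-1) := by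
    rcases Nat.eq_zero_or_pos d with hd0 | hd1
    · have hcq : p - q = C ((p-q).coeff 0) :=
        eq_C_of_natDegree_eq_zero (by rw [← hddef]; exact hd0)
      have he' : derivative (p - q) = 0 := by rw [hcq, derivative_C]
      simp [he']
    · refine natDegree_mul_le.trans ?_
      have h1 : (q^(n3-2)).natDegree ≤ (n3-2)*r := natDegree_pow_le_of_le _ hdq.le
      have h2 : (derivative (p - q)).natDegree ≤ d - 1 :=
        (natDegree_derivative_le _).trans (by omega)
      have h3 : (n3-2)*r = (n3-3)*r + r := by
        rw [show n3-2 = (n3-3)+1 by omega, Nat.succ_mul]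
      omega
  have hvDb : (q^(n3-2) * derivative (p - q)).coeff (((n3-3)*r + d) + (r-1))
      = c^(n3-2) * ((d:𝕜) * ((p-q).coeff d)) := by
    rcases Nat.eq_zero_or_pos d with hd0 | hd1
    · have hcq : p - q = C ((p-q).coeff 0) :=
        eq_C_of_natDegree_eq_zero (by rw [← hddef]; exact hd0)
      have he' : derivative (p - q) = 0 := by rw [hcq, derivative_C]
      simp [he', hd0]
    · have hiD : ((n3-3)*r + d) + (r-1) = (n3-2)*r + (d-1) := by
        rw [show n3-2 = (n3-3)+1 by omega, Nat.succ_mul]; omega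
      rw [hiD, coeff_mul_add_eq_of_natDegree_le (natDegree_pow_le_of_le _ hdq.le)
          ((natDegree_derivative_le _).trans (by omega)),
        coeff_pow_of_natDegree_le hdq.le, hcrq, coeff_derivative,
        show d-1+1 = d by omega]
      have h1 : ((d-1 : ℕ) : 𝕜) + 1 = (d:𝕜) := by push_cast [Nat.cast_sub hd1]; ring
      rw [h1]
      ring
  -- conditional coefficients at N
  have hcoe1 : (A1 * (p^(n3-n1) - q^(n3-n1))).coeff N
      = (if AbelIdx.I1 ∈ Tie n1 n2 n3 A1.natDegree A2.natDegree A3.natDegree r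
          then A1.leadingCoeff else 0) * (((n3-n1:ℕ):𝕜) * c^(n3-n1-1) * ((p-q).coeff d)) := by
    by_cases h : AbelIdx.I1 ∈ Tie n1 n2 n3 A1.natDegree A2.natDegree A3.natDegree r
    · have heqN : N = A1.natDegree + ((n3-n1-1)*r + d) := by
        have : ((A1.natDegree + ((n3-n1-1)*r + d) : ℕ) : ℤ) = (N:ℤ) := by
          rw [hN, hidx1, hT1.mp h]
        exact_mod_cast this.symm
      rw [heqN, hv1, if_pos h]
    · have hOlt : O < (n1:ℤ)*r - A1.natDegree :=
        lt_of_le_of_ne hO1 (fun hh => h (hT1.mpr hh.symm))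
      have hlt : (A1 * (p^(n3-n1) - q^(n3-n1))).natDegree < N := by
        refine lt_of_le_of_lt hb1 ?_
        have : ((A1.natDegree + ((n3-n1-1)*r + d) : ℕ):ℤ) < (N:ℤ) := by
          rw [hN, hidx1]; omega
        exact_mod_cast this
      rw [coeff_eq_zero_of_natDegree_lt hlt, if_neg h, zero_mul]
  have hcoe2 : (A2 * (p^(n3-n2) - q^(n3-n2))).coeff N
      = (if AbelIdx.I2 ∈ Tie n1 n2 n3 A1.natDegree A2.natDegree A3.natDegree r
          then A2.leadingCoeff else 0) * (((n3-n2:ℕ):𝕜) * c^(n3-n2-1) * ((p-q).coeff d)) := by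
    by_cases h : AbelIdx.I2 ∈ Tie n1 n2 n3 A1.natDegree A2.natDegree A3.natDegree r
    · have heqN : N = A2.natDegree + ((n3-n2-1)*r + d) := by
        have : ((A2.natDegree + ((n3-n2-1)*r + d) : ℕ) : ℤ) = (N:ℤ) := by
          rw [hN, hidx2, hT2.mp h]
        exact_mod_cast this.symm
      rw [heqN, hv2, if_pos h]
    · have hOlt : O < (n2:ℤ)*r - A2.natDegree :=
        lt_of_le_of_ne hO2 (fun hh => h (hT2.mpr hh.symm))
      have hlt : (A2 * (p^(n3-n2) - q^(n3-n2))).natDegree < N := by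
        refine lt_of_le_of_lt hb2 ?_
        have : ((A2.natDegree + ((n3-n2-1)*r + d) : ℕ):ℤ) < (N:ℤ) := by
          rw [hN, hidx2]; omega
        exact_mod_cast this
      rw [coeff_eq_zero_of_natDegree_lt hlt, if_neg h, zero_mul]
  have hcoeDa : ((p^(n3-2) - q^(n3-2)) * derivative p).coeff N
      = (if AbelIdx.D ∈ Tie n1 n2 n3 A1.natDegree A2.natDegree A3.natDegree r
          then (1:𝕜) else 0)
        * (((n3-2:ℕ):𝕜) * c^(n3-3) * ((r:𝕜) * c) * ((p-q).coeff d)) := by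
    by_cases h : AbelIdx.D ∈ Tie n1 n2 n3 A1.natDegree A2.natDegree A3.natDegree r
    · have heqN : N = ((n3-3)*r + d) + (r-1) := by
        have : ((((n3-3)*r + d) + (r-1) : ℕ) : ℤ) = (N:ℤ) := by
          rw [hN, hidxD, hTD.mp h]
        exact_mod_cast this.symm
      rw [heqN, hvDa, if_pos h, one_mul]; ring
    · have hOlt : O < (r:ℤ) + 1 := lt_of_le_of_ne hOD (fun hh => h (hTD.mpr hh.symm))
      have hlt : ((p^(n3-2) - q^(n3-2)) * derivative p).natDegree < N := by
        refine lt_of_le_of_lt hbDa ?_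
        have : ((((n3-3)*r + d) + (r-1) : ℕ):ℤ) < (N:ℤ) := by rw [hN, hidxD]; omega
        exact_mod_cast this
      rw [coeff_eq_zero_of_natDegree_lt hlt, if_neg h, zero_mul]
  have hcoeDb : (q^(n3-2) * derivative (p - q)).coeff N
      = (if AbelIdx.D ∈ Tie n1 n2 n3 A1.natDegree A2.natDegree A3.natDegree r
          then (1:𝕜) else 0) * (c^(n3-2) * (d:𝕜) * ((p-q).coeff d)) := by
    by_cases h : AbelIdx.D ∈ Tie n1 n2 n3 A1.natDegree A2.natDegree A3.natDegree r
    · have heqN : N = ((n3-3)*r + d) + (r-1) := by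
        have : ((((n3-3)*r + d) + (r-1) : ℕ) : ℤ) = (N:ℤ) := by
          rw [hN, hidxD, hTD.mp h]
        exact_mod_cast this.symm
      rw [heqN, hvDb, if_pos h, one_mul]; ring
    · have hOlt : O < (r:ℤ) + 1 := lt_of_le_of_ne hOD (fun hh => h (hTD.mpr hh.symm))
      have hlt : (q^(n3-2) * derivative (p - q)).natDegree < N := by
        refine lt_of_le_of_lt hbDb ?_
        have : ((((n3-3)*r + d) + (r-1) : ℕ):ℤ) < (N:ℤ) := by rw [hN, hidxD]; omega
        exact_mod_cast this
      rw [coeff_eq_zero_of_natDegree_lt hlt, if_neg h, zero_mul]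
  -- extract the second scalar relation
  have h0 := congrArg (fun f => Polynomial.coeff f N) hE
  simp only [coeff_add, coeff_zero] at h0
  rw [hcoeDa, hcoeDb, hcoe2, hcoe1] at h0
  have hfac : ((if AbelIdx.D ∈ Tie n1 n2 n3 A1.natDegree A2.natDegree A3.natDegree r
          then (1:𝕜) else 0) * (((n3-2:ℕ):𝕜) * c^(n3-3) * ((r:𝕜) * c))
      + (if AbelIdx.D ∈ Tie n1 n2 n3 A1.natDegree A2.natDegree A3.natDegree r
          then (1:𝕜) else 0) * (c^(n3-2) * (d:𝕜))
      + (if AbelIdx.I2 ∈ Tie n1 n2 n3 A1.natDegree A2.natDegree A3.natDegree r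
          then A2.leadingCoeff else 0) * (((n3-n2:ℕ):𝕜) * c^(n3-n2-1))
      + (if AbelIdx.I1 ∈ Tie n1 n2 n3 A1.natDegree A2.natDegree A3.natDegree r
          then A1.leadingCoeff else 0) * (((n3-n1:ℕ):𝕜) * c^(n3-n1-1))) * ((p-q).coeff d)
      = 0 := by linear_combination h0
  have hS2 := (mul_eq_zero.mp hfac).resolve_right hε
  -- cast cleanups
  have hc1' : ((n3-n1:ℕ):𝕜) = (n3:𝕜) - n1 := by
    push_cast [Nat.cast_sub (by omega : n1 ≤ n3)]; ring
  have hc2' : ((n3-n2:ℕ):𝕜) = (n3:𝕜) - n2 := by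
    push_cast [Nat.cast_sub (by omega : n2 ≤ n3)]; ring
  have hcD' : ((n3-2:ℕ):𝕜) = (n3:𝕜) - 2 := by
    push_cast [Nat.cast_sub (by omega : 2 ≤ n3)]; ring
  rw [hc1', hc2', hcD'] at hS2
  -- power facts
  have g1 : c^(n3-1) * (c⁻¹)^(n1-1) = c^(n3-n1) := by
    rw [inv_pow, show c^(n3-1) = c^(n3-n1) * c^(n1-1) by rw [← pow_add]; congr 1; omega,
      mul_assoc, mul_inv_cancel₀ (pow_ne_zero _ hc0), mul_one]
  have g2 : c^(n3-1) * (c⁻¹)^(n2-1) = c^(n3-n2) := by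
    rw [inv_pow, show c^(n3-1) = c^(n3-n2) * c^(n2-1) by rw [← pow_add]; congr 1; omega,
      mul_assoc, mul_inv_cancel₀ (pow_ne_zero _ hc0), mul_one]
  have g3 : c^(n3-1) * (c⁻¹)^(n3-1) = 1 := by
    rw [inv_pow, mul_inv_cancel₀ (pow_ne_zero _ hc0)]
  have w1 : c^(n3-n1-1) * c = c^(n3-n1) := by rw [← pow_succ]; congr 1; omega
  have w2 : c^(n3-n2-1) * c = c^(n3-n2) := by rw [← pow_succ]; congr 1; omega
  have w3 : c^(n3-3) * c = c^(n3-2) := by rw [← pow_succ]; congr 1; omega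
  have wD : c^(n3-2) * c = c^(n3-1) := by rw [← pow_succ]; congr 1; omega
  -- evaluation of the derivative of the edge polynomial
  have heval : eval c⁻¹ (derivative (edgePoly n1 n2 n3 A1 A2 A3 r))
      = (if AbelIdx.I1 ∈ Tie n1 n2 n3 A1.natDegree A2.natDegree A3.natDegree r
          then A1.leadingCoeff else 0) * ((n1:𝕜) * (c⁻¹)^(n1-1))
      + (if AbelIdx.I2 ∈ Tie n1 n2 n3 A1.natDegree A2.natDegree A3.natDegree r
          then A2.leadingCoeff else 0) * ((n2:𝕜) * (c⁻¹)^(n2-1))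
      + (if AbelIdx.I3 ∈ Tie n1 n2 n3 A1.natDegree A2.natDegree A3.natDegree r
          then A3.leadingCoeff else 0) * ((n3:𝕜) * (c⁻¹)^(n3-1))
      + (if AbelIdx.D ∈ Tie n1 n2 n3 A1.natDegree A2.natDegree A3.natDegree r
          then (1:𝕜) else 0) * (r:𝕜) := by
    rw [edgePoly_eq]
    simp only [derivative_add, derivative_C_mul, derivative_X_pow, derivative_X,
      eval_add, eval_mul, eval_C, eval_pow, eval_X, mul_one]
  by_cases hD : AbelIdx.D ∈ Tie n1 n2 n3 A1.natDegree A2.natDegree A3.natDegree r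
  · refine absurd ?_ (hnd2 hD c⁻¹ (inv_ne_zero hc0) hroot (r - d) (by omega))
    have hcm : ((r-d:ℕ):𝕜) = (r:𝕜) - (d:𝕜) := by
      push_cast [Nat.cast_sub (by omega : d ≤ r)]; ring
    rw [heval, hcm]
    simp only [if_pos hD] at hS1p hS2 ⊢
    have hkey : c^(n3-1) *
        ((if AbelIdx.I1 ∈ Tie n1 n2 n3 A1.natDegree A2.natDegree A3.natDegree r
            then A1.leadingCoeff else 0) * ((n1:𝕜) * (c⁻¹)^(n1-1))
        + (if AbelIdx.I2 ∈ Tie n1 n2 n3 A1.natDegree A2.natDegree A3.natDegree r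
            then A2.leadingCoeff else 0) * ((n2:𝕜) * (c⁻¹)^(n2-1))
        + (if AbelIdx.I3 ∈ Tie n1 n2 n3 A1.natDegree A2.natDegree A3.natDegree r
            then A3.leadingCoeff else 0) * ((n3:𝕜) * (c⁻¹)^(n3-1))
        + 1 * (r:𝕜) + ((r:𝕜) - (d:𝕜))) = 0 := by
      linear_combination (n3:𝕜) * hS1p - c * hS2
        + (if AbelIdx.I1 ∈ Tie n1 n2 n3 A1.natDegree A2.natDegree A3.natDegree r
            then A1.leadingCoeff else 0) * ((n3:𝕜) - n1) * w1
        + (if AbelIdx.I2 ∈ Tie n1 n2 n3 A1.natDegree A2.natDegree A3.natDegree r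
            then A2.leadingCoeff else 0) * ((n3:𝕜) - n2) * w2
        + ((n3:𝕜) - 2) * (r:𝕜) * c * w3
        + (((n3:𝕜) - 2) * (r:𝕜) + (d:𝕜)) * wD
        + (if AbelIdx.I1 ∈ Tie n1 n2 n3 A1.natDegree A2.natDegree A3.natDegree r
            then A1.leadingCoeff else 0) * (n1:𝕜) * g1
        + (if AbelIdx.I2 ∈ Tie n1 n2 n3 A1.natDegree A2.natDegree A3.natDegree r
            then A2.leadingCoeff else 0) * (n2:𝕜) * g2
        + (if AbelIdx.I3 ∈ Tie n1 n2 n3 A1.natDegree A2.natDegree A3.natDegree r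
            then A3.leadingCoeff else 0) * (n3:𝕜) * g3
    exact (mul_eq_zero.mp hkey).resolve_left (pow_ne_zero _ hc0)
  · refine absurd ?_ (hnd1 c⁻¹ (inv_ne_zero hc0) hroot)
    rw [heval]
    simp only [if_neg hD] at hS1p hS2 ⊢
    have hkey : c^(n3-1) *
        ((if AbelIdx.I1 ∈ Tie n1 n2 n3 A1.natDegree A2.natDegree A3.natDegree r
            then A1.leadingCoeff else 0) * ((n1:𝕜) * (c⁻¹)^(n1-1))
        + (if AbelIdx.I2 ∈ Tie n1 n2 n3 A1.natDegree A2.natDegree A3.natDegree r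
            then A2.leadingCoeff else 0) * ((n2:𝕜) * (c⁻¹)^(n2-1))
        + (if AbelIdx.I3 ∈ Tie n1 n2 n3 A1.natDegree A2.natDegree A3.natDegree r
            then A3.leadingCoeff else 0) * ((n3:𝕜) * (c⁻¹)^(n3-1))
        + 0 * (r:𝕜)) = 0 := by
      linear_combination (n3:𝕜) * hS1p - c * hS2
        + (if AbelIdx.I1 ∈ Tie n1 n2 n3 A1.natDegree A2.natDegree A3.natDegree r
            then A1.leadingCoeff else 0) * ((n3:𝕜) - n1) * w1
        + (if AbelIdx.I2 ∈ Tie n1 n2 n3 A1.natDegree A2.natDegree A3.natDegree r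
            then A2.leadingCoeff else 0) * ((n3:𝕜) - n2) * w2
        + (if AbelIdx.I1 ∈ Tie n1 n2 n3 A1.natDegree A2.natDegree A3.natDegree r
            then A1.leadingCoeff else 0) * (n1:𝕜) * g1
        + (if AbelIdx.I2 ∈ Tie n1 n2 n3 A1.natDegree A2.natDegree A3.natDegree r
            then A2.leadingCoeff else 0) * (n2:𝕜) * g2
        + (if AbelIdx.I3 ∈ Tie n1 n2 n3 A1.natDegree A2.natDegree A3.natDegree r
            then A3.leadingCoeff else 0) * (n3:𝕜) * g3
    exact (mul_eq_zero.mp hkey).resolve_left (pow_ne_zero _ hc0)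

lemma edgePoly_ne_zero {𝕜 : Type*} [Field 𝕜] [CharZero 𝕜] (n1 n2 n3 : ℕ)
    (hn1 : 1 < n1) (hn12 : n1 < n2) (hn23 : n2 < n3)
    (A1 A2 A3 : Polynomial 𝕜) (hA1 : A1 ≠ 0) (hA2 : A2 ≠ 0) (hA3 : A3 ≠ 0)
    (r : ℕ) (hr : 1 ≤ r)
    (hadm : EdgeAdmissible n1 n2 n3 A1.natDegree A2.natDegree A3.natDegree r) :
    edgePoly n1 n2 n3 A1 A2 A3 r ≠ 0 := by
  obtain ⟨ℓ, hℓ⟩ : (Tie n1 n2 n3 A1.natDegree A2.natDegree A3.natDegree r).Nonempty :=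
    Finset.card_pos.mp (by unfold EdgeAdmissible at hadm; omega)
  intro h0
  have e12 : n1 ≠ n2 := by omega
  have e13 : n1 ≠ n3 := by omega
  have e23 : n2 ≠ n3 := by omega
  have e11 : n1 ≠ 1 := by omega
  have e21 : n2 ≠ 1 := by omega
  have e31 : n3 ≠ 1 := by omega
  cases ℓ with
  | I1 =>
    have : (edgePoly n1 n2 n3 A1 A2 A3 r).coeff n1 = A1.leadingCoeff := by
      rw [edgePoly_eq]
      simp [coeff_X_pow, coeff_X, hℓ, e12, e13, e11, e12.symm, e13.symm, e11.symm]
    rw [h0, coeff_zero] at this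
    exact hA1 (leadingCoeff_eq_zero.mp this.symm)
  | I2 =>
    have : (edgePoly n1 n2 n3 A1 A2 A3 r).coeff n2 = A2.leadingCoeff := by
      rw [edgePoly_eq]
      simp [coeff_X_pow, coeff_X, hℓ, e12, e23, e21, e12.symm, e23.symm, e21.symm]
    rw [h0, coeff_zero] at this
    exact hA2 (leadingCoeff_eq_zero.mp this.symm)
  | I3 =>
    have : (edgePoly n1 n2 n3 A1 A2 A3 r).coeff n3 = A3.leadingCoeff := by
      rw [edgePoly_eq]
      simp [coeff_X_pow, coeff_X, hℓ, e13, e23, e31, e13.symm, e23.symm, e31.symm]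
    rw [h0, coeff_zero] at this
    exact hA3 (leadingCoeff_eq_zero.mp this.symm)
  | D =>
    have : (edgePoly n1 n2 n3 A1 A2 A3 r).coeff 1 = (r:𝕜) := by
      rw [edgePoly_eq]
      simp [coeff_X_pow, coeff_X, hℓ, e11, e21, e31, e11.symm, e21.symm, e31.symm]
    rw [h0, coeff_zero] at this
    exact (Nat.cast_ne_zero.mpr (by omega : r ≠ 0)) this.symm

lemma count_aux {𝕜 : Type*} [Field 𝕜] [DecidableEq 𝕜] (P : Polynomial 𝕜) (hP : P ≠ 0) :
    (P.roots.toFinset.filter (fun c => c ≠ 0)).card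
      ≤ P.natDegree - P.rootMultiplicity 0 := by
  have h1 : P.roots.toFinset.filter (fun c => c ≠ 0)
      = (P.roots.filter (fun c => c ≠ 0)).toFinset := (Multiset.toFinset_filter _ _).symm
  rw [h1]
  refine (Multiset.toFinset_card_le _).trans ?_
  have h2 : Multiset.card (P.roots.filter (fun c => c ≠ 0))
      + Multiset.card (P.roots.filter (fun c => ¬ c ≠ 0)) = Multiset.card P.roots := by
    rw [← Multiset.card_add, Multiset.filter_add_not]
  have h3 : Multiset.card (P.roots.filter (fun c => ¬ c ≠ 0)) = P.rootMultiplicity 0 := by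
    rw [← count_roots, Multiset.count_eq_card_filter_eq]
    congr 1
    apply Multiset.filter_congr
    intro x _
    simp [eq_comm]
  have h4 := P.card_roots'
  omega

/-- Corollary 3.7. Under the nondegeneracy assumptions at an
edge-admissible degree `r`, the set of solution denominators of degree `r` is finite,
with cardinality at most the number of distinct nonzero roots of `P_r`, hence at most
`deg P_r − mult_0 P_r`. -/
theorem stmt5 {𝕜 : Type*} [RCLike 𝕜] (n1 n2 n3 : ℕ)
    (hn1 : 1 < n1) (hn12 : n1 < n2) (hn23 : n2 < n3)
    (A1 A2 A3 : Polynomial 𝕜) (hA1 : A1 ≠ 0) (hA2 : A2 ≠ 0) (hA3 : A3 ≠ 0)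
    (r : ℕ) (hr : 1 ≤ r)
    (hadm : EdgeAdmissible n1 n2 n3 A1.natDegree A2.natDegree A3.natDegree r)
    (hnd1 : ∀ c : 𝕜, c ≠ 0 → (edgePoly n1 n2 n3 A1 A2 A3 r).IsRoot c →
      (Polynomial.derivative (edgePoly n1 n2 n3 A1 A2 A3 r)).eval c ≠ 0)
    (hnd2 : AbelIdx.D ∈ Tie n1 n2 n3 A1.natDegree A2.natDegree A3.natDegree r →
      ∀ c : 𝕜, c ≠ 0 → (edgePoly n1 n2 n3 A1 A2 A3 r).IsRoot c →
        ∀ m : ℕ, 1 ≤ m →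
          (Polynomial.derivative (edgePoly n1 n2 n3 A1 A2 A3 r)).eval c + (m : 𝕜) ≠ 0) :
    {p : Polynomial 𝕜 | IsSolDen n1 n2 n3 A1 A2 A3 p ∧ p.natDegree = r}.Finite ∧
    {p : Polynomial 𝕜 | IsSolDen n1 n2 n3 A1 A2 A3 p ∧ p.natDegree = r}.ncard ≤
      ((edgePoly n1 n2 n3 A1 A2 A3 r).roots.toFinset.filter (fun c => c ≠ 0)).card ∧
    {p : Polynomial 𝕜 | IsSolDen n1 n2 n3 A1 A2 A3 p ∧ p.natDegree = r}.ncard ≤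
      (edgePoly n1 n2 n3 A1 A2 A3 r).natDegree -
        (edgePoly n1 n2 n3 A1 A2 A3 r).rootMultiplicity 0 := by
  
  classical
  have hPne : edgePoly n1 n2 n3 A1 A2 A3 r ≠ 0 :=
    edgePoly_ne_zero n1 n2 n3 hn1 hn12 hn23 A1 A2 A3 hA1 hA2 hA3 r hr hadm
  set S := {p : Polynomial 𝕜 | IsSolDen n1 n2 n3 A1 A2 A3 p ∧ p.natDegree = r} with hSdef
  set F := ((edgePoly n1 n2 n3 A1 A2 A3 r).roots.toFinset.filter (fun c => c ≠ 0)) with hFdef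
  have hmaps : ∀ p ∈ S, (p.leadingCoeff)⁻¹ ∈ (F : Set 𝕜) := by
    intro p hp
    obtain ⟨hsol, hdeg⟩ := hp
    obtain ⟨hp0, heq⟩ := hsol
    have hroot := solden_root n1 n2 n3 hn1 hn12 hn23 A1 A2 A3 r hr p hp0 heq hdeg
    have hc0 : p.leadingCoeff ≠ 0 := leadingCoeff_ne_zero.mpr hp0
    simp only [hFdef, Finset.coe_filter, Set.mem_setOf_eq, Multiset.mem_toFinset]
    exact ⟨(mem_roots hPne).mpr hroot, inv_ne_zero hc0⟩
  have hinj : Set.InjOn (fun p : Polynomial 𝕜 => (p.leadingCoeff)⁻¹) S := by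
    intro p hp q hq hfe
    obtain ⟨hsolp, hdp⟩ := hp
    obtain ⟨hp0, heqp⟩ := hsolp
    obtain ⟨hsolq, hdq⟩ := hq
    obtain ⟨hq0, heqq⟩ := hsolq
    have hlc : p.leadingCoeff = q.leadingCoeff := by
      have h2 := congrArg (fun x : 𝕜 => x⁻¹) hfe
      simpa using h2
    exact solden_unique n1 n2 n3 hn1 hn12 hn23 A1 A2 A3 r hr hnd1 hnd2 p q hp0 hq0
      heqp heqq hdp hdq hlc
  have himg : (fun p : Polynomial 𝕜 => (p.leadingCoeff)⁻¹) '' S ⊆ (F : Set 𝕜) := by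
    rintro _ ⟨p, hp, rfl⟩
    exact hmaps p hp
  have hfin : S.Finite := Set.Finite.of_finite_image (F.finite_toSet.subset himg) hinj
  have hcard : S.ncard ≤ F.card := by
    calc S.ncard = ((fun p : Polynomial 𝕜 => (p.leadingCoeff)⁻¹) '' S).ncard :=
          (Set.ncard_image_of_injOn hinj).symm
      _ ≤ (F : Set 𝕜).ncard := Set.ncard_le_ncard himg F.finite_toSet
      _ = F.card := Set.ncard_coe_finset F
  exact ⟨hfin, hcard, hcard.trans (count_aux _ hPne)⟩
end

section
/- Assume 𝕜 = ℝ. Let r ≥ 1 be an edge-admissible integer and assume that every nonzero root C ∈ ℝ of P_r satisfies P_r′(C) ≠ 0 and, if ∂ ∈ T_r, also P_r′(C) + m ≠ 0 for every integer m ≥ 1. Then the number of solution denominators p with deg p = r is at most 2·(|T_r| − 1). -/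
open Polynomial

lemma geom_facts (p q : ℝ[X]) (r k : ℕ)
    (hpd : p.natDegree = r) (hqd : q.natDegree = r)
    (hlead : q.leadingCoeff = p.leadingCoeff) :
    (∑ i ∈ Finset.range k, p ^ i * q ^ (k - 1 - i)).natDegree ≤ (k - 1) * r ∧
    (∑ i ∈ Finset.range k, p ^ i * q ^ (k - 1 - i)).coeff ((k - 1) * r)
      = k * p.leadingCoeff ^ (k - 1) := by
  constructor
  · apply natDegree_sum_le_of_forall_le
    intro i hi
    rw [Finset.mem_range] at hi
    calc (p ^ i * q ^ (k - 1 - i)).natDegree ≤ (p ^ i).natDegree + (q ^ (k-1-i)).natDegree :=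
          natDegree_mul_le
      _ = i * r + (k - 1 - i) * r := by rw [natDegree_pow, natDegree_pow, hpd, hqd]
      _ ≤ (k - 1) * r := by
          rw [← add_mul]
          apply Nat.mul_le_mul_right
          omega
  · rw [finset_sum_coeff]
    have hterm : ∀ i ∈ Finset.range k,
        (p ^ i * q ^ (k - 1 - i)).coeff ((k - 1) * r) = p.leadingCoeff ^ (k - 1) := by
      intro i hi
      rw [Finset.mem_range] at hi
      have hsplit : (k - 1) * r = i * r + (k - 1 - i) * r := by
        rw [← add_mul]
        congr 1
        omega
      rw [hsplit]
      rw [coeff_mul_add_eq_of_natDegree_le (by rw [natDegree_pow, hpd]) (by rw [natDegree_pow, hqd])]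
      have h1 : (p ^ i).coeff (i * r) = p.leadingCoeff ^ i := by
        have hn : (p ^ i).natDegree = i * r := by rw [natDegree_pow, hpd]
        rw [← hn, coeff_natDegree, leadingCoeff_pow]
      have h2 : (q ^ (k - 1 - i)).coeff ((k - 1 - i) * r) = p.leadingCoeff ^ (k - 1 - i) := by
        have hn : (q ^ (k - 1 - i)).natDegree = (k - 1 - i) * r := by rw [natDegree_pow, hqd]
        rw [← hn, coeff_natDegree, leadingCoeff_pow, hlead]
      rw [h1, h2, ← pow_add]
      congr 1
      omega
    rw [Finset.sum_congr rfl hterm]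
    simp [mul_comm]

lemma coeff_diff_term (B p q u : ℝ[X]) (r w d M : ℕ)
    (hpd : p.natDegree = r) (hqd : q.natDegree = r)
    (hlead : q.leadingCoeff = p.leadingCoeff) (hu : u = p - q) (hud : u.natDegree ≤ d) :
    (M = B.natDegree + ((w-1)*r + d) →
      (B * (p^w - q^w)).coeff M
        = B.leadingCoeff * (w * p.leadingCoeff^(w-1) * u.coeff d))
    ∧ (B.natDegree + ((w-1)*r + d) < M → (B * (p^w - q^w)).coeff M = 0) := by
  have hfact : p^w - q^w = (∑ i ∈ Finset.range w, p ^ i * q ^ (w - 1 - i)) * u := by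
    rw [hu]
    exact (geom_sum₂_mul p q w).symm
  obtain ⟨hS1, hS2⟩ := geom_facts p q r w hpd hqd hlead
  set S := ∑ i ∈ Finset.range w, p ^ i * q ^ (w - 1 - i) with hSdef
  have hSu : (S * u).natDegree ≤ (w-1)*r + d :=
    natDegree_mul_le.trans (by omega)
  constructor
  · intro hM
    subst hM
    rw [hfact, coeff_mul_add_eq_of_natDegree_le le_rfl hSu,
      coeff_mul_add_eq_of_natDegree_le hS1 hud, hS2, coeff_natDegree]
  · intro hM
    rw [hfact]
    apply coeff_eq_zero_of_natDegree_lt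
    calc (B * (S * u)).natDegree ≤ B.natDegree + (S*u).natDegree := natDegree_mul_le
      _ ≤ B.natDegree + ((w-1)*r + d) := by omega
      _ < M := hM

lemma coeff_diff_deriv (p q u : ℝ[X]) (r a d M : ℕ)
    (hpd : p.natDegree = r) (hqd : q.natDegree = r)
    (hlead : q.leadingCoeff = p.leadingCoeff) (hu : u = p - q) (hud : u.natDegree ≤ d) :
    (M + 1 = a*r + d →
      (p^a * derivative p - q^a * derivative q).coeff M
        = ((a*r + d : ℕ):ℝ) * p.leadingCoeff^a * u.coeff d)
    ∧ (a*r + d ≤ M → (p^a * derivative p - q^a * derivative q).coeff M = 0) := by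
  have ha1 : ((a:ℝ)+1) ≠ 0 := by positivity
  have hder : derivative (p^(a+1) - q^(a+1))
      = C ((a:ℝ)+1) * (p^a * derivative p - q^a * derivative q) := by
    rw [derivative_sub, derivative_pow_succ, derivative_pow_succ]
    ring
  obtain ⟨hS1, hS2⟩ := geom_facts p q r (a+1) hpd hqd hlead
  rw [Nat.add_sub_cancel] at hS1 hS2
  set S := ∑ i ∈ Finset.range (a+1), p ^ i * q ^ (a - i) with hSdef
  have hfact : p^(a+1) - q^(a+1) = S * u := by
    rw [hu, hSdef]
    have := geom_sum₂_mul p q (a+1)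
    rw [Nat.add_sub_cancel] at this
    exact this.symm
  have hkey : ((a:ℝ)+1) * (p^a * derivative p - q^a * derivative q).coeff M
      = (S * u).coeff (M+1) * ((M:ℝ)+1) := by
    calc ((a:ℝ)+1) * (p^a * derivative p - q^a * derivative q).coeff M
        = (C ((a:ℝ)+1) * (p^a * derivative p - q^a * derivative q)).coeff M :=
          (coeff_C_mul _).symm
      _ = (derivative (p^(a+1) - q^(a+1))).coeff M := by rw [hder]
      _ = (derivative (S * u)).coeff M := by rw [hfact]
      _ = (S * u).coeff (M+1) * ((M:ℝ)+1) := by rw [coeff_derivative]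
  constructor
  · intro hM
    have hco : (S * u).coeff (M+1) = (((a:ℝ)+1) * p.leadingCoeff ^ a) * u.coeff d := by
      rw [hM, show a*r + d = a*r + d from rfl]
      rw [coeff_mul_add_eq_of_natDegree_le hS1 hud, hS2]
      push_cast
      ring
    apply mul_left_cancel₀ ha1
    rw [hkey, hco]
    have hcast : (M:ℝ) + 1 = ((a*r + d : ℕ):ℝ) := by exact_mod_cast congrArg (Nat.cast : ℕ → ℝ) hM
    rw [hcast]
    ring
  · intro hM
    have hco : (S * u).coeff (M+1) = 0 := by
      apply coeff_eq_zero_of_natDegree_lt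
      calc (S * u).natDegree ≤ S.natDegree + u.natDegree := natDegree_mul_le
        _ ≤ a*r + d := by omega
        _ < M + 1 := by omega
    apply mul_left_cancel₀ ha1
    rw [hkey, hco]
    ring

lemma coeffEq2 (n1 n2 n3 : ℕ) (hn1 : 1 < n1) (hn12 : n1 < n2) (hn23 : n2 < n3)
    (A1 A2 A3 : ℝ[X]) (hA1 : A1 ≠ 0) (hA2 : A2 ≠ 0) (hA3 : A3 ≠ 0)
    (r : ℕ) (hr : 1 ≤ r) (p q : ℝ[X])
    (hp : IsSolDen n1 n2 n3 A1 A2 A3 p) (hq : IsSolDen n1 n2 n3 A1 A2 A3 q)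
    (hpd : p.natDegree = r) (hqd : q.natDegree = r)
    (hlead : q.leadingCoeff = p.leadingCoeff) (hne : p ≠ q) :
    ∃ d : ℕ, d < r ∧ (p - q).coeff d ≠ 0 ∧
    ((if AbelIdx.D ∈ Tie n1 n2 n3 A1.natDegree A2.natDegree A3.natDegree r then
        (((n3-2)*r + d : ℕ):ℝ) * p.leadingCoeff^(n3-2) * (p-q).coeff d else 0)
    + (if AbelIdx.I2 ∈ Tie n1 n2 n3 A1.natDegree A2.natDegree A3.natDegree r then
        A2.leadingCoeff * (((n3-n2 : ℕ)):ℝ) * p.leadingCoeff^((n3-n2)-1) * (p-q).coeff d else 0)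
    + (if AbelIdx.I1 ∈ Tie n1 n2 n3 A1.natDegree A2.natDegree A3.natDegree r then
        A1.leadingCoeff * (((n3-n1 : ℕ)):ℝ) * p.leadingCoeff^((n3-n1)-1) * (p-q).coeff d else 0)
      = 0) := by
  set u := p - q with hu
  have hu0 : u ≠ 0 := sub_ne_zero.mpr hne
  set d := u.natDegree with hd_def
  have hur : u.coeff r = 0 := by
    have hp' : p.coeff r = p.leadingCoeff := by rw [← hpd, coeff_natDegree]
    have hq' : q.coeff r = q.leadingCoeff := by rw [← hqd, coeff_natDegree]
    rw [hu, coeff_sub, hp', hq', hlead, sub_self]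
  have hd : d < r := by
    rcases lt_or_ge d r with h | h
    · exact h
    · exfalso
      have hle : u.natDegree ≤ r := by
        rw [hu]
        exact (natDegree_sub_le p q).trans (by omega)
      have : d = r := by omega
      apply hu0
      have : u.leadingCoeff = 0 := by rw [leadingCoeff, ← hd_def, this, hur]
      exact leadingCoeff_eq_zero.mp this
  have hδ : u.coeff d ≠ 0 := by
    rw [hd_def]
    exact mt leadingCoeff_eq_zero.mp hu0
  refine ⟨d, hd, hδ, ?_⟩
  set a1 := A1.natDegree with ha1
  set a2 := A2.natDegree with ha2
  set a3 := A3.natDegree with ha3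
  set O := Omin n1 n2 n3 a1 a2 a3 r with hO
  set T := Tie n1 n2 n3 a1 a2 a3 r with hT
  have hmem : ∀ ℓ, ℓ ∈ T ↔ Phi n1 n2 n3 a1 a2 a3 r ℓ = O := by
    intro ℓ; simp [hT, Tie, hO]
  have hO1 : O ≤ (n1 : ℤ) * r - a1 := (min_le_left _ _).trans (min_le_left _ _)
  have hO2 : O ≤ (n2 : ℤ) * r - a2 := (min_le_left _ _).trans (min_le_right _ _)
  have hOD : O ≤ (r : ℤ) + 1 := (min_le_right _ _).trans (min_le_right _ _)
  have hr' : (1 : ℤ) ≤ r := by exact_mod_cast hr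
  have hd' : (d : ℤ) < r := by exact_mod_cast hd
  have hn3' : (4 : ℤ) ≤ n3 := by exact_mod_cast (by omega : 4 ≤ n3)
  have hrr : (r:ℤ) ≤ (n3 : ℤ) * r - 2 * r := by nlinarith
  set m := r - d with hm
  have hm' : (m : ℤ) = (r : ℤ) - d := by
    rw [hm]; push_cast [Nat.cast_sub hd.le]; ring
  set M : ℕ := ((n3 : ℤ) * r - O - m).toNat with hMdef
  have hM : (M : ℤ) = (n3 : ℤ) * r - O - m := by
    apply Int.toNat_of_nonneg
    have : (m:ℤ) ≤ r := by rw [hm']; omega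
    nlinarith
  have hSub : (p ^ (n3-2) * derivative p - q ^ (n3-2) * derivative q)
      + A2 * (p ^ (n3-n2) - q ^ (n3-n2)) + A1 * (p ^ (n3-n1) - q ^ (n3-n1)) = 0 := by
    linear_combination hp.2 - hq.2
  have hcoeff : (p ^ (n3-2) * derivative p - q ^ (n3-2) * derivative q).coeff M
      + (A2 * (p ^ (n3-n2) - q ^ (n3-n2))).coeff M
      + (A1 * (p ^ (n3-n1) - q ^ (n3-n1))).coeff M = 0 := by
    have := congrArg (fun f => f.coeff M) hSub
    simpa using this
  have hud : u.natDegree ≤ d := le_of_eq hd_def.symm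
  have cD : (p ^ (n3-2) * derivative p - q ^ (n3-2) * derivative q).coeff M =
      if AbelIdx.D ∈ T then (((n3-2)*r + d : ℕ):ℝ) * p.leadingCoeff^(n3-2) * u.coeff d
      else 0 := by
    split_ifs with h
    · apply (coeff_diff_deriv p q u r (n3-2) d M hpd hqd hlead hu hud).1
      rw [hmem] at h
      have : ((M + 1 : ℕ) : ℤ) = (((n3-2)*r + d : ℕ) : ℤ) := by
        push_cast [Nat.cast_sub (show 2 ≤ n3 by omega)]
        rw [hM, ← h, hm']
        show (n3:ℤ)*r - ((r:ℤ)+1) - ((r:ℤ) - d) + 1 = _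
        ring
      exact_mod_cast this
    · apply (coeff_diff_deriv p q u r (n3-2) d M hpd hqd hlead hu hud).2
      rw [hmem] at h
      have hlt : (r : ℤ) + 1 > O := lt_of_le_of_ne hOD (fun hc => h hc.symm)
      have : (((n3-2)*r + d : ℕ) : ℤ) ≤ (M : ℤ) := by
        push_cast [Nat.cast_sub (show 2 ≤ n3 by omega)]
        rw [hM, hm']
        have : O ≤ (r:ℤ) := by omega
        linarith
      exact_mod_cast this
  have c2 : (A2 * (p ^ (n3-n2) - q ^ (n3-n2))).coeff M =
      if AbelIdx.I2 ∈ T then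
        A2.leadingCoeff * (((n3-n2 : ℕ)):ℝ) * p.leadingCoeff^((n3-n2)-1) * u.coeff d
      else 0 := by
    split_ifs with h
    · rw [(coeff_diff_term A2 p q u r (n3-n2) d M hpd hqd hlead hu hud).1 ?_]
      · push_cast
        ring
      · rw [hmem] at h
        have : (M : ℤ) = ((a2 + ((n3-n2-1)*r + d) : ℕ) : ℤ) := by
          push_cast [Nat.cast_sub (show n2 ≤ n3 by omega), Nat.cast_sub (show 1 ≤ n3 - n2 by omega)]
          rw [hM, ← h, hm']
          show (n3:ℤ)*r - ((n2:ℤ)*r - a2) - ((r:ℤ) - d) = _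
          push_cast [Nat.cast_sub (show n2 ≤ n3 by omega)]
          ring
        rw [← ha2]
        exact_mod_cast this
    · apply (coeff_diff_term A2 p q u r (n3-n2) d M hpd hqd hlead hu hud).2
      rw [hmem] at h
      have hlt : (n2:ℤ)*r - a2 > O := lt_of_le_of_ne hO2 (fun hc => h hc.symm)
      have : ((a2 + ((n3-n2-1)*r + d) : ℕ) : ℤ) < (M : ℤ) := by
        push_cast [Nat.cast_sub (show n2 ≤ n3 by omega), Nat.cast_sub (show 1 ≤ n3 - n2 by omega)]
        rw [hM, hm']
        push_cast [Nat.cast_sub (show n2 ≤ n3 by omega)]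
        linarith
      rw [← ha2]
      exact_mod_cast this
  have c1 : (A1 * (p ^ (n3-n1) - q ^ (n3-n1))).coeff M =
      if AbelIdx.I1 ∈ T then
        A1.leadingCoeff * (((n3-n1 : ℕ)):ℝ) * p.leadingCoeff^((n3-n1)-1) * u.coeff d
      else 0 := by
    split_ifs with h
    · rw [(coeff_diff_term A1 p q u r (n3-n1) d M hpd hqd hlead hu hud).1 ?_]
      · push_cast
        ring
      · rw [hmem] at h
        have : (M : ℤ) = ((a1 + ((n3-n1-1)*r + d) : ℕ) : ℤ) := by
          push_cast [Nat.cast_sub (show n1 ≤ n3 by omega), Nat.cast_sub (show 1 ≤ n3 - n1 by omega)]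
          rw [hM, ← h, hm']
          show (n3:ℤ)*r - ((n1:ℤ)*r - a1) - ((r:ℤ) - d) = _
          push_cast [Nat.cast_sub (show n1 ≤ n3 by omega)]
          ring
        rw [← ha1]
        exact_mod_cast this
    · apply (coeff_diff_term A1 p q u r (n3-n1) d M hpd hqd hlead hu hud).2
      rw [hmem] at h
      have hlt : (n1:ℤ)*r - a1 > O := lt_of_le_of_ne hO1 (fun hc => h hc.symm)
      have : ((a1 + ((n3-n1-1)*r + d) : ℕ) : ℤ) < (M : ℤ) := by
        push_cast [Nat.cast_sub (show n1 ≤ n3 by omega), Nat.cast_sub (show 1 ≤ n3 - n1 by omega)]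
        rw [hM, hm']
        push_cast [Nat.cast_sub (show n1 ≤ n3 by omega)]
        linarith
      rw [← ha1]
      exact_mod_cast this
  rw [cD, c2, c1] at hcoeff
  exact hcoeff


lemma coeff_term_main (B pp : ℝ[X]) (hB : B ≠ 0) (hpp : pp ≠ 0) (k N : ℕ) :
    (N = B.natDegree + k * pp.natDegree →
      (B * pp ^ k).coeff N = B.leadingCoeff * pp.leadingCoeff ^ k)
  ∧ (B.natDegree + k * pp.natDegree < N → (B * pp ^ k).coeff N = 0) := by
  have hdeg : (B * pp ^ k).natDegree = B.natDegree + k * pp.natDegree := by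
    rw [natDegree_mul hB (pow_ne_zero _ hpp), natDegree_pow]
  constructor
  · intro h
    subst h
    rw [← hdeg, coeff_natDegree, leadingCoeff_mul, leadingCoeff_pow]
  · intro h
    apply coeff_eq_zero_of_natDegree_lt
    omega

lemma deriv_facts (p : ℝ[X]) (r : ℕ) (hr : 1 ≤ r) (hdeg : p.natDegree = r) :
    (derivative p).natDegree = r - 1 ∧ (derivative p).leadingCoeff = r * p.leadingCoeff ∧
    derivative p ≠ 0 := by
  subst hdeg
  have hp0 : p ≠ 0 := fun h => by simp [h] at hr
  have hlc : p.leadingCoeff ≠ 0 := leadingCoeff_ne_zero.mpr hp0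
  have hc : (derivative p).coeff (p.natDegree - 1) = p.natDegree * p.leadingCoeff := by
    rw [coeff_derivative]
    have h1 : (p.natDegree - 1) + 1 = p.natDegree := by omega
    rw [h1, coeff_natDegree]
    have h2 : ((p.natDegree - 1 : ℕ) : ℝ) + 1 = p.natDegree := by
      rw [Nat.cast_sub hr]
      push_cast
      ring
    rw [h2, mul_comm]
  have hne : (derivative p).coeff (p.natDegree - 1) ≠ 0 := by
    rw [hc]
    apply mul_ne_zero _ hlc
    simp only [ne_eq, Nat.cast_eq_zero]
    omega
  have hle : (derivative p).natDegree ≤ p.natDegree - 1 := natDegree_derivative_le p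
  have hge : p.natDegree - 1 ≤ (derivative p).natDegree := le_natDegree_of_ne_zero hne
  have heq : (derivative p).natDegree = p.natDegree - 1 := le_antisymm hle hge
  refine ⟨heq, ?_, fun h => by rw [h] at hne; simp at hne⟩
  rw [leadingCoeff, heq, hc]

lemma coeffEq (n1 n2 n3 : ℕ) (hn1 : 1 < n1) (hn12 : n1 < n2) (hn23 : n2 < n3)
    (A1 A2 A3 : ℝ[X]) (hA1 : A1 ≠ 0) (hA2 : A2 ≠ 0) (hA3 : A3 ≠ 0)
    (r : ℕ) (hr : 1 ≤ r) (p : ℝ[X]) (hp : IsSolDen n1 n2 n3 A1 A2 A3 p)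
    (hdeg : p.natDegree = r) :
    (if AbelIdx.D ∈ Tie n1 n2 n3 A1.natDegree A2.natDegree A3.natDegree r then
        ((r : ℝ) * p.leadingCoeff) * p.leadingCoeff ^ (n3 - 2) else 0) +
    (if AbelIdx.I3 ∈ Tie n1 n2 n3 A1.natDegree A2.natDegree A3.natDegree r then
        A3.leadingCoeff else 0) +
    (if AbelIdx.I2 ∈ Tie n1 n2 n3 A1.natDegree A2.natDegree A3.natDegree r then
        A2.leadingCoeff * p.leadingCoeff ^ (n3 - n2) else 0) +
    (if AbelIdx.I1 ∈ Tie n1 n2 n3 A1.natDegree A2.natDegree A3.natDegree r then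
        A1.leadingCoeff * p.leadingCoeff ^ (n3 - n1) else 0) = 0 := by
  obtain ⟨hp0, hEq⟩ := hp
  set a1 := A1.natDegree with ha1
  set a2 := A2.natDegree with ha2
  set a3 := A3.natDegree with ha3
  set O := Omin n1 n2 n3 a1 a2 a3 r with hO
  set T := Tie n1 n2 n3 a1 a2 a3 r with hT
  have hmem : ∀ ℓ, ℓ ∈ T ↔ Phi n1 n2 n3 a1 a2 a3 r ℓ = O := by
    intro ℓ; simp [hT, Tie, hO]
  have hO1 : O ≤ (n1 : ℤ) * r - a1 := (min_le_left _ _).trans (min_le_left _ _)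
  have hO2 : O ≤ (n2 : ℤ) * r - a2 := (min_le_left _ _).trans (min_le_right _ _)
  have hO3 : O ≤ (n3 : ℤ) * r - a3 := (min_le_right _ _).trans (min_le_left _ _)
  have hOD : O ≤ (r : ℤ) + 1 := (min_le_right _ _).trans (min_le_right _ _)
  have hr' : (1 : ℤ) ≤ r := by exact_mod_cast hr
  have hn3' : (4 : ℤ) ≤ n3 := by exact_mod_cast (by omega : 4 ≤ n3)
  have hON : O ≤ (n3 : ℤ) * r := by
    calc O ≤ (r : ℤ) + 1 := hOD
      _ ≤ 4 * r := by linarith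
      _ ≤ (n3 : ℤ) * r := by
          apply mul_le_mul_of_nonneg_right hn3'
          linarith
  set N : ℕ := ((n3 : ℤ) * r - O).toNat with hNdef
  have hN : (N : ℤ) = (n3 : ℤ) * r - O := Int.toNat_of_nonneg (by linarith)
  have hcoeff : (p ^ (n3 - 2) * derivative p).coeff N + A3.coeff N
      + (A2 * p ^ (n3 - n2)).coeff N + (A1 * p ^ (n3 - n1)).coeff N = 0 := by
    have := congrArg (fun f => f.coeff N) hEq
    simpa using this
  obtain ⟨hd1, hd2, hd3⟩ := deriv_facts p r hr hdeg
  have hγ : p.leadingCoeff ≠ 0 := leadingCoeff_ne_zero.mpr hp0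
  have cD : (p ^ (n3 - 2) * derivative p).coeff N =
      if AbelIdx.D ∈ T then ((r : ℝ) * p.leadingCoeff) * p.leadingCoeff ^ (n3 - 2) else 0 := by
    rw [mul_comm]
    split_ifs with h
    · rw [(coeff_term_main (derivative p) p hd3 hp0 (n3-2) N).1 ?_, hd2]
      rw [hd1, hdeg]
      rw [hmem] at h
      have : (N : ℤ) = ((r - 1) + (n3 - 2) * r : ℕ) := by
        push_cast [Nat.cast_sub hr, Nat.cast_sub (show 2 ≤ n3 by omega)]
        rw [hN, ← h]
        show (n3:ℤ) * r - ((r:ℤ)+1) = _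
        ring
      exact_mod_cast this
    · apply (coeff_term_main (derivative p) p hd3 hp0 (n3-2) N).2
      rw [hd1, hdeg]
      rw [hmem] at h
      have hlt : (r : ℤ) + 1 > O := lt_of_le_of_ne hOD (fun hc => h hc.symm)
      have : ((r - 1) + (n3 - 2) * r : ℕ) < (N : ℤ) := by
        push_cast [Nat.cast_sub hr, Nat.cast_sub (show 2 ≤ n3 by omega)]
        rw [hN]
        show (r:ℤ) - 1 + ((n3:ℤ) - 2) * r < _
        linarith
      exact_mod_cast this
  have c3 : A3.coeff N = if AbelIdx.I3 ∈ T then A3.leadingCoeff else 0 := by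
    split_ifs with h
    · rw [hmem] at h
      have : N = a3 := by
        have : (N:ℤ) = a3 := by
          rw [hN, ← h]
          show (n3:ℤ)*r - ((n3:ℤ)*r - a3) = _
          ring
        exact_mod_cast this
      rw [this, ha3, coeff_natDegree]
    · apply coeff_eq_zero_of_natDegree_lt
      rw [hmem] at h
      have hlt : (n3:ℤ)*r - a3 > O := lt_of_le_of_ne hO3 (fun hc => h hc.symm)
      have : (a3 : ℤ) < N := by rw [hN]; linarith
      rw [← ha3] at *
      exact_mod_cast this
  have c2 : (A2 * p ^ (n3 - n2)).coeff N =
      if AbelIdx.I2 ∈ T then A2.leadingCoeff * p.leadingCoeff ^ (n3 - n2) else 0 := by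
    split_ifs with h
    · apply (coeff_term_main A2 p hA2 hp0 (n3-n2) N).1
      rw [hdeg, ← ha2]
      rw [hmem] at h
      have : (N : ℤ) = (a2 + (n3 - n2) * r : ℕ) := by
        push_cast [Nat.cast_sub (show n2 ≤ n3 by omega)]
        rw [hN, ← h]
        show (n3:ℤ)*r - ((n2:ℤ)*r - a2) = _
        ring
      exact_mod_cast this
    · apply (coeff_term_main A2 p hA2 hp0 (n3-n2) N).2
      rw [hdeg, ← ha2]
      rw [hmem] at h
      have hlt : (n2:ℤ)*r - a2 > O := lt_of_le_of_ne hO2 (fun hc => h hc.symm)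
      have : (a2 + (n3 - n2) * r : ℕ) < (N : ℤ) := by
        push_cast [Nat.cast_sub (show n2 ≤ n3 by omega)]
        rw [hN]
        show (a2:ℤ) + ((n3:ℤ) - n2) * r < _
        linarith
      exact_mod_cast this
  have c1 : (A1 * p ^ (n3 - n1)).coeff N =
      if AbelIdx.I1 ∈ T then A1.leadingCoeff * p.leadingCoeff ^ (n3 - n1) else 0 := by
    split_ifs with h
    · apply (coeff_term_main A1 p hA1 hp0 (n3-n1) N).1
      rw [hdeg, ← ha1]
      rw [hmem] at h
      have : (N : ℤ) = (a1 + (n3 - n1) * r : ℕ) := by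
        push_cast [Nat.cast_sub (show n1 ≤ n3 by omega)]
        rw [hN, ← h]
        show (n3:ℤ)*r - ((n1:ℤ)*r - a1) = _
        ring
      exact_mod_cast this
    · apply (coeff_term_main A1 p hA1 hp0 (n3-n1) N).2
      rw [hdeg, ← ha1]
      rw [hmem] at h
      have hlt : (n1:ℤ)*r - a1 > O := lt_of_le_of_ne hO1 (fun hc => h hc.symm)
      have : (a1 + (n3 - n1) * r : ℕ) < (N : ℤ) := by
        push_cast [Nat.cast_sub (show n1 ≤ n3 by omega)]
        rw [hN]
        show (a1:ℤ) + ((n3:ℤ) - n1) * r < _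
        linarith
      exact_mod_cast this
  rw [cD, c3, c2, c1] at hcoeff
  linarith [hcoeff]

lemma algebraA (i j k : ℕ) (γ : ℝ) (hγ : γ ≠ 0) (b1 b2 b3 bd : ℝ)
    (h : bd * γ ^ (i+j+k+3) + b3 + b2 * γ ^ (k+1) + b1 * γ ^ (j+k+2) = 0) :
    b1 * (γ⁻¹) ^ (i+2) + b2 * (γ⁻¹) ^ (i+j+3) + b3 * (γ⁻¹) ^ (i+j+k+4) + bd * γ⁻¹ = 0 := by
  have hne : γ ^ (i+j+k+4) ≠ 0 := pow_ne_zero _ hγ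
  have e : ∀ s t : ℕ, (γ⁻¹)^s = γ^t * (γ⁻¹)^(s+t) := by
    intro s t
    rw [pow_add, ← mul_assoc, mul_comm (γ^t), mul_assoc, ← mul_pow, mul_inv_cancel₀ hγ, one_pow,
      mul_one]
  have e1 := e 1 (i+j+k+3)
  rw [pow_one] at e1
  linear_combination (γ⁻¹)^(i+j+k+4) * h + b1 * e (i+2) (j+k+2) + b2 * e (i+j+3) (k+1)
    + bd * e1

lemma partA (n1 n2 n3 : ℕ) (hn1 : 1 < n1) (hn12 : n1 < n2) (hn23 : n2 < n3)
    (A1 A2 A3 : ℝ[X]) (hA1 : A1 ≠ 0) (hA2 : A2 ≠ 0) (hA3 : A3 ≠ 0)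
    (r : ℕ) (hr : 1 ≤ r) (p : ℝ[X]) (hp : IsSolDen n1 n2 n3 A1 A2 A3 p)
    (hdeg : p.natDegree = r) :
    (edgePoly n1 n2 n3 A1 A2 A3 r).IsRoot (p.leadingCoeff)⁻¹ := by
  obtain ⟨i, rfl⟩ : ∃ i, n1 = i + 2 := ⟨n1 - 2, by omega⟩
  obtain ⟨j, rfl⟩ : ∃ j, n2 = i + j + 3 := ⟨n2 - (i + 3), by omega⟩
  obtain ⟨k, rfl⟩ : ∃ k, n3 = i + j + k + 4 := ⟨n3 - (i + j + 4), by omega⟩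
  have hγ : p.leadingCoeff ≠ 0 := leadingCoeff_ne_zero.mpr hp.1
  set γ := p.leadingCoeff with hγdef
  set T := Tie (i+2) (i+j+3) (i+j+k+4) A1.natDegree A2.natDegree A3.natDegree r with hT
  have hkey := coeffEq (i+2) (i+j+3) (i+j+k+4) hn1 hn12 hn23 A1 A2 A3 hA1 hA2 hA3 r hr p hp hdeg
  rw [show (i+j+k+4) - 2 = i+j+k+2 from by omega, show (i+j+k+4) - (i+j+3) = k+1 from by omega,
    show (i+j+k+4) - (i+2) = j+k+2 from by omega] at hkey
  have e_d : (if AbelIdx.D ∈ T then (r:ℝ) else 0) * γ ^ (i+j+k+3)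
      = (if AbelIdx.D ∈ T then ((r : ℝ) * p.leadingCoeff) * p.leadingCoeff ^ (i+j+k+2) else 0) := by
    by_cases h : AbelIdx.D ∈ T <;> simp [h, hγdef] <;> ring
  have e_2 : (if AbelIdx.I2 ∈ T then A2.leadingCoeff else 0) * γ ^ (k+1)
      = (if AbelIdx.I2 ∈ T then A2.leadingCoeff * p.leadingCoeff ^ (k+1) else 0) := by
    by_cases h : AbelIdx.I2 ∈ T <;> simp [h, hγdef]
  have e_1 : (if AbelIdx.I1 ∈ T then A1.leadingCoeff else 0) * γ ^ (j+k+2)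
      = (if AbelIdx.I1 ∈ T then A1.leadingCoeff * p.leadingCoeff ^ (j+k+2) else 0) := by
    by_cases h : AbelIdx.I1 ∈ T <;> simp [h, hγdef]
  have hkey' : (if AbelIdx.D ∈ T then (r:ℝ) else 0) * γ ^ (i+j+k+3)
      + (if AbelIdx.I3 ∈ T then A3.leadingCoeff else 0)
      + (if AbelIdx.I2 ∈ T then A2.leadingCoeff else 0) * γ ^ (k+1)
      + (if AbelIdx.I1 ∈ T then A1.leadingCoeff else 0) * γ ^ (j+k+2) = 0 := by
    rw [e_d, e_2, e_1]
    exact hkey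
  have halg := algebraA i j k γ hγ
    (if AbelIdx.I1 ∈ T then A1.leadingCoeff else 0)
    (if AbelIdx.I2 ∈ T then A2.leadingCoeff else 0)
    (if AbelIdx.I3 ∈ T then A3.leadingCoeff else 0)
    (if AbelIdx.D ∈ T then (r:ℝ) else 0) hkey'
  simp only [ite_mul, zero_mul] at halg
  show eval γ⁻¹ _ = 0
  simp only [edgePoly, eval_add, apply_ite (eval γ⁻¹), eval_mul, eval_pow, eval_C, eval_X,
    eval_zero, eval_natCast]
  rw [← hT]
  convert halg using 2 <;> ring



lemma algebraB (i j k r d : ℕ) (hd : d < r) (γ δ b1 b2 b3 ι : ℝ) (hγ : γ ≠ 0) (hδ : δ ≠ 0)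
    (h1 : ι * r * γ^(i+j+k+3) + b3 + b2 * γ^(k+1) + b1 * γ^(j+k+2) = 0)
    (h2 : ι * (((i+j+k+2)*r + d : ℕ) : ℝ) * γ^(i+j+k+2) * δ
        + b2 * ((k+1 : ℕ) : ℝ) * γ^k * δ
        + b1 * ((j+k+2 : ℕ) : ℝ) * γ^(j+k+1) * δ = 0) :
    b1 * ((i+2 : ℕ):ℝ) * (γ⁻¹)^(i+1) + b2 * ((i+j+3 : ℕ):ℝ) * (γ⁻¹)^(i+j+2)
      + b3 * ((i+j+k+4 : ℕ):ℝ) * (γ⁻¹)^(i+j+k+3) + ι * r + ι * ((r - d : ℕ):ℝ) = 0 := by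
  have h2' : ι * (((i+j+k+2)*r + d : ℕ) : ℝ) * γ^(i+j+k+2)
        + b2 * ((k+1 : ℕ) : ℝ) * γ^k
        + b1 * ((j+k+2 : ℕ) : ℝ) * γ^(j+k+1) = 0 := by
    have hmul : (ι * (((i+j+k+2)*r + d : ℕ) : ℝ) * γ^(i+j+k+2)
        + b2 * ((k+1 : ℕ) : ℝ) * γ^k
        + b1 * ((j+k+2 : ℕ) : ℝ) * γ^(j+k+1)) * δ = 0 := by linear_combination h2
    exact (mul_eq_zero.mp hmul).resolve_right hδ
  have q : ∀ s t : ℕ, (γ⁻¹)^s * γ^(s+t) = γ^t := by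
    intro s t
    rw [pow_add, inv_pow, inv_mul_cancel_left₀ (pow_ne_zero s hγ)]
  have q1 := q (i+1) (j+k+2)
  have q2 := q (i+j+2) (k+1)
  have q3 := q (i+j+k+3) 0
  rw [show (i+1)+(j+k+2) = i+j+k+3 from by omega] at q1
  rw [show (i+j+2)+(k+1) = i+j+k+3 from by omega] at q2
  rw [show (i+j+k+3)+0 = i+j+k+3 from by omega, pow_zero] at q3
  push_cast [Nat.cast_sub hd.le] at h2' ⊢
  have key : (b1 * ((i:ℝ)+2) * (γ⁻¹)^(i+1) + b2 * ((i:ℝ)+(j:ℝ)+3) * (γ⁻¹)^(i+j+2)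
      + b3 * ((i:ℝ)+(j:ℝ)+(k:ℝ)+4) * (γ⁻¹)^(i+j+k+3) + ι * r + ι * ((r:ℝ) - (d:ℝ)))
      * γ^(i+j+k+3) = 0 := by
    linear_combination ((i:ℝ)+j+k+4) * h1 - γ * h2' + (b1*((i:ℝ)+2)) * q1
      + (b2*((i:ℝ)+(j:ℝ)+3)) * q2 + (b3*((i:ℝ)+(j:ℝ)+(k:ℝ)+4)) * q3
  have := mul_right_cancel₀ (pow_ne_zero (i+j+k+3) hγ) (key.trans (zero_mul _).symm)
  linarith [this]

lemma partA' (n1 n2 n3 : ℕ) (hn1 : 1 < n1) (hn12 : n1 < n2) (hn23 : n2 < n3)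
    (A1 A2 A3 : ℝ[X]) (hA1 : A1 ≠ 0) (hA2 : A2 ≠ 0) (hA3 : A3 ≠ 0)
    (r : ℕ) (hr : 1 ≤ r)
    (hnd1 : ∀ c : ℝ, c ≠ 0 → (edgePoly n1 n2 n3 A1 A2 A3 r).IsRoot c →
      (Polynomial.derivative (edgePoly n1 n2 n3 A1 A2 A3 r)).eval c ≠ 0)
    (hnd2 : AbelIdx.D ∈ Tie n1 n2 n3 A1.natDegree A2.natDegree A3.natDegree r →
      ∀ c : ℝ, c ≠ 0 → (edgePoly n1 n2 n3 A1 A2 A3 r).IsRoot c →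
        ∀ m : ℕ, 1 ≤ m →
          (Polynomial.derivative (edgePoly n1 n2 n3 A1 A2 A3 r)).eval c + (m : ℝ) ≠ 0)
    (p q : ℝ[X]) (hp : IsSolDen n1 n2 n3 A1 A2 A3 p) (hq : IsSolDen n1 n2 n3 A1 A2 A3 q)
    (hpd : p.natDegree = r) (hqd : q.natDegree = r)
    (hlead : q.leadingCoeff = p.leadingCoeff) (hne : p ≠ q) : False := by
  have hroot := partA n1 n2 n3 hn1 hn12 hn23 A1 A2 A3 hA1 hA2 hA3 r hr p hp hpd
  have hkey1 := coeffEq n1 n2 n3 hn1 hn12 hn23 A1 A2 A3 hA1 hA2 hA3 r hr p hp hpd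
  obtain ⟨d, hd, hδ, hkey2⟩ := coeffEq2 n1 n2 n3 hn1 hn12 hn23 A1 A2 A3 hA1 hA2 hA3 r hr
    p q hp hq hpd hqd hlead hne
  obtain ⟨i, rfl⟩ : ∃ i, n1 = i + 2 := ⟨n1 - 2, by omega⟩
  obtain ⟨j, rfl⟩ : ∃ j, n2 = i + j + 3 := ⟨n2 - (i + 3), by omega⟩
  obtain ⟨k, rfl⟩ : ∃ k, n3 = i + j + k + 4 := ⟨n3 - (i + j + 4), by omega⟩
  have hγ : p.leadingCoeff ≠ 0 := leadingCoeff_ne_zero.mpr hp.1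
  have hC : (p.leadingCoeff)⁻¹ ≠ 0 := inv_ne_zero hγ
  set γ := p.leadingCoeff with hγdef
  set δ := (p - q).coeff d with hδdef
  set T := Tie (i+2) (i+j+3) (i+j+k+4) A1.natDegree A2.natDegree A3.natDegree r with hT
  rw [show (i+j+k+4) - 2 = i+j+k+2 from by omega, show (i+j+k+4) - (i+j+3) = k+1 from by omega,
    show (i+j+k+4) - (i+2) = j+k+2 from by omega] at hkey1 hkey2
  rw [show (k+1) - 1 = k from by omega, show (j+k+2) - 1 = j+k+1 from by omega] at hkey2
  -- convert hkey1 into b-form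
  set b1 := (if AbelIdx.I1 ∈ T then A1.leadingCoeff else 0) with hb1
  set b2 := (if AbelIdx.I2 ∈ T then A2.leadingCoeff else 0) with hb2
  set b3 := (if AbelIdx.I3 ∈ T then A3.leadingCoeff else 0) with hb3
  set ι := (if AbelIdx.D ∈ T then (1:ℝ) else 0) with hι
  have h1 : ι * r * γ ^ (i+j+k+3) + b3 + b2 * γ ^ (k+1) + b1 * γ ^ (j+k+2) = 0 := by
    have e_d : ι * (r:ℝ) * γ ^ (i+j+k+3)
        = (if AbelIdx.D ∈ T then ((r : ℝ) * p.leadingCoeff) * p.leadingCoeff ^ (i+j+k+2) else 0) := by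
      by_cases h : AbelIdx.D ∈ T <;> simp [hι, h, hγdef] <;> ring
    have e_2 : b2 * γ ^ (k+1)
        = (if AbelIdx.I2 ∈ T then A2.leadingCoeff * p.leadingCoeff ^ (k+1) else 0) := by
      by_cases h : AbelIdx.I2 ∈ T <;> simp [hb2, h, hγdef]
    have e_1 : b1 * γ ^ (j+k+2)
        = (if AbelIdx.I1 ∈ T then A1.leadingCoeff * p.leadingCoeff ^ (j+k+2) else 0) := by
      by_cases h : AbelIdx.I1 ∈ T <;> simp [hb1, h, hγdef]
    rw [e_d, e_2, e_1, hb3]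
    exact hkey1
  have h2 : ι * (((i+j+k+2)*r + d : ℕ) : ℝ) * γ^(i+j+k+2) * δ
      + b2 * ((k+1 : ℕ) : ℝ) * γ^k * δ
      + b1 * ((j+k+2 : ℕ) : ℝ) * γ^(j+k+1) * δ = 0 := by
    have e_d : ι * (((i+j+k+2)*r + d : ℕ) : ℝ) * γ^(i+j+k+2) * δ
        = (if AbelIdx.D ∈ T then
            (((i+j+k+2)*r + d : ℕ):ℝ) * p.leadingCoeff^(i+j+k+2) * (p-q).coeff d else 0) := by
      by_cases h : AbelIdx.D ∈ T <;> simp [hι, h, hγdef, hδdef] <;> ring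
    have e_2 : b2 * ((k+1 : ℕ) : ℝ) * γ^k * δ
        = (if AbelIdx.I2 ∈ T then
            A2.leadingCoeff * ((k+1 : ℕ):ℝ) * p.leadingCoeff^k * (p-q).coeff d else 0) := by
      by_cases h : AbelIdx.I2 ∈ T <;> simp [hb2, h, hγdef, hδdef] <;> ring
    have e_1 : b1 * ((j+k+2 : ℕ) : ℝ) * γ^(j+k+1) * δ
        = (if AbelIdx.I1 ∈ T then
            A1.leadingCoeff * ((j+k+2 : ℕ):ℝ) * p.leadingCoeff^(j+k+1) * (p-q).coeff d else 0) := by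
      by_cases h : AbelIdx.I1 ∈ T <;> simp [hb1, h, hγdef, hδdef] <;> ring
    rw [e_d, e_2, e_1]
    exact hkey2
  have halg := algebraB i j k r d hd γ δ b1 b2 b3 ι hγ hδ h1 h2
  -- evaluate the derivative of the edge polynomial at γ⁻¹
  have hEvDE : (derivative (edgePoly (i+2) (i+j+3) (i+j+k+4) A1 A2 A3 r)).eval γ⁻¹
      = b1 * ((i+2 : ℕ):ℝ) * (γ⁻¹)^(i+1) + b2 * ((i+j+3 : ℕ):ℝ) * (γ⁻¹)^(i+j+2)
        + b3 * ((i+j+k+4 : ℕ):ℝ) * (γ⁻¹)^(i+j+k+3) + ι * r := by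
    simp only [edgePoly, ← hT, derivative_add, apply_ite derivative, derivative_zero,
      derivative_C_mul, derivative_X_pow]
    rw [show (i+2) - 1 = i+1 from by omega, show (i+j+3) - 1 = i+j+2 from by omega,
      show (i+j+k+4) - 1 = i+j+k+3 from by omega]
    have hdr : derivative ((r : ℝ[X]) * X) = (r : ℝ[X]) := by
      simp
    rw [hdr]
    simp only [eval_add, apply_ite (eval γ⁻¹), eval_mul, eval_pow, eval_C, eval_X,
      eval_zero, eval_natCast]
    by_cases h1' : AbelIdx.I1 ∈ T <;> by_cases h2' : AbelIdx.I2 ∈ T <;>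
      by_cases h3' : AbelIdx.I3 ∈ T <;> by_cases hD' : AbelIdx.D ∈ T <;>
      simp [h1', h2', h3', hD', hb1, hb2, hb3, hι] <;> push_cast <;> ring
  by_cases hD : AbelIdx.D ∈ T
  · have hι1 : ι = 1 := by rw [hι, if_pos hD]
    refine hnd2 hD γ⁻¹ hC hroot (r - d) (by omega) ?_
    rw [hEvDE, hι1]
    push_cast [Nat.cast_sub hd.le] at halg ⊢
    rw [hι1] at halg
    linarith [halg]
  · have hι0 : ι = 0 := by rw [hι, if_neg hD]
    refine hnd1 γ⁻¹ hC hroot ?_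
    rw [hEvDE, hι0]
    rw [hι0] at halg
    push_cast at halg ⊢
    linarith [halg]
lemma rolle_pos (g : ℝ[X]) (hg : g ≠ 0) (hg' : derivative g ≠ 0) :
    {x : ℝ | 0 < x ∧ g.IsRoot x}.ncard ≤ {x : ℝ | 0 < x ∧ (derivative g).IsRoot x}.ncard + 1 := by
  have hfin : {x : ℝ | 0 < x ∧ g.IsRoot x}.Finite :=
    (g.finite_setOf_isRoot hg).subset (fun x hx => hx.2)
  have hfin' : {x : ℝ | 0 < x ∧ (derivative g).IsRoot x}.Finite :=
    ((derivative g).finite_setOf_isRoot hg').subset (fun x hx => hx.2)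
  rw [Set.ncard_eq_toFinset_card _ hfin, Set.ncard_eq_toFinset_card _ hfin']
  set s := hfin.toFinset
  set t := hfin'.toFinset
  have key : ∀ᵉ (x ∈ s) (y ∈ s), x < y → (∀ z ∈ s, z ∉ Set.Ioo x y) →
      ∃ z ∈ t, x < z ∧ z < y := by
    intro x hx y hy hxy _
    rw [Set.Finite.mem_toFinset] at hx hy
    obtain ⟨z, hz1, hz2⟩ := exists_deriv_eq_zero hxy g.continuousOn (hx.2.trans hy.2.symm)
    refine ⟨z, ?_, hz1.1, hz1.2⟩
    rw [Set.Finite.mem_toFinset]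
    exact ⟨hx.1.trans hz1.1, by rwa [IsRoot, ← g.deriv]⟩
  calc s.card ≤ (t \ s).card + 1 := Finset.card_le_diff_of_interleaved key
    _ ≤ t.card + 1 := by gcongr; exact Finset.sdiff_subset

lemma pos_roots_lt_aux (N : ℕ) : ∀ g : ℝ[X], g ≠ 0 → g.natDegree ≤ N →
    {x : ℝ | 0 < x ∧ g.IsRoot x}.ncard < g.support.card := by
  induction N with
  | zero =>
    intro g hg hdeg
    obtain ⟨c, rfl⟩ := natDegree_eq_zero.mp (Nat.le_zero.mp hdeg)
    have hc : c ≠ 0 := by simpa using hg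
    have : {x : ℝ | 0 < x ∧ (C c).IsRoot x} = ∅ := by
      ext x; simp [IsRoot, hc]
    rw [this, Set.ncard_empty]
    exact Finset.card_pos.mpr (support_nonempty.mpr hg)
  | succ N ih =>
    intro g hg hdeg
    rcases Nat.eq_zero_or_pos g.natDegree with h0 | h0
    · obtain ⟨c, rfl⟩ := natDegree_eq_zero.mp h0
      have hc : c ≠ 0 := by simpa using hg
      have : {x : ℝ | 0 < x ∧ (C c).IsRoot x} = ∅ := by ext x; simp [IsRoot, hc]
      rw [this, Set.ncard_empty]
      exact Finset.card_pos.mpr (support_nonempty.mpr hg)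
    rcases eq_or_ne (g.coeff 0) 0 with hc0 | hc0
    · -- g = divX g * X
      have hgx : g.divX * X = g := by
        have := g.divX_mul_X_add
        rwa [hc0, map_zero, add_zero] at this
      have hdx : g.divX ≠ 0 := by
        intro h; rw [← hgx, h, zero_mul] at hg; exact hg rfl
      have hdd : g.divX.natDegree ≤ N := by
        rw [natDegree_divX_eq_natDegree_tsub_one]; omega
      have hsets : {x : ℝ | 0 < x ∧ g.IsRoot x} = {x : ℝ | 0 < x ∧ g.divX.IsRoot x} := by
        ext x
        simp only [Set.mem_setOf_eq, IsRoot, and_congr_right_iff]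
        intro hx
        have hev : eval x g = eval x g.divX * x := by
          conv_lhs => rw [← hgx]
          simp
        rw [hev]
        simp [hx.ne']
      have hsupp : g.support.card = g.divX.support.card := by
        apply Finset.card_bij (fun n _ => n - 1)
        · intro n hn
          rw [mem_support_iff] at hn ⊢
          have hn0 : n ≠ 0 := by rintro rfl; exact hn hc0
          obtain ⟨m, rfl⟩ := Nat.exists_eq_succ_of_ne_zero hn0
          rw [← hgx, coeff_mul_X] at hn
          simpa using hn
        · intro a ha b hb hab
          rw [mem_support_iff] at ha hb
          have ha0 : a ≠ 0 := by rintro rfl; exact ha hc0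
          have hb0 : b ≠ 0 := by rintro rfl; exact hb hc0
          omega
        · intro b hb
          refine ⟨b + 1, ?_, by omega⟩
          rw [mem_support_iff] at hb ⊢
          rw [← hgx, coeff_mul_X]
          exact hb
      rw [hsets, hsupp]
      exact ih g.divX hdx hdd
    · -- coeff 0 ≠ 0, use derivative
      have hg' : derivative g ≠ 0 := by
        intro h
        exact absurd (natDegree_eq_zero_of_derivative_eq_zero h) (by omega)
      have hd' : (derivative g).natDegree ≤ N := by
        have := natDegree_derivative_lt (p := g) (by omega)
        omega
      have ihg := ih (derivative g) hg' hd'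
      have hsupp : (derivative g).support.card + 1 ≤ g.support.card := by
        have hsub : (derivative g).support.image (· + 1) ⊆ g.support.erase 0 := by
          intro n hn
          simp only [Finset.mem_image] at hn
          obtain ⟨m, hm, rfl⟩ := hn
          rw [mem_support_iff] at hm
          rw [Finset.mem_erase]
          refine ⟨by omega, ?_⟩
          rw [mem_support_iff]
          intro h
          rw [coeff_derivative, h, zero_mul] at hm
          exact hm rfl
        have hcard : (derivative g).support.card ≤ (g.support.erase 0).card := by
          rw [← Finset.card_image_of_injective _ (add_left_injective 1)]
          exact Finset.card_le_card hsub
        have h0mem : 0 ∈ g.support := mem_support_iff.mpr hc0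
        have := Finset.card_erase_of_mem h0mem
        have hpos : 1 ≤ g.support.card := Finset.card_pos.mpr ⟨0, h0mem⟩
        omega
      have := rolle_pos g hg hg'
      omega

lemma pos_roots_lt (g : ℝ[X]) (hg : g ≠ 0) :
    {x : ℝ | 0 < x ∧ g.IsRoot x}.ncard < g.support.card :=
  pos_roots_lt_aux g.natDegree g hg le_rfl

lemma coeff_comp_neg_X (p : ℝ[X]) (n : ℕ) :
    (p.comp (-X)).coeff n = (-1) ^ n * p.coeff n := by
  induction p using Polynomial.induction_on' with
  | add p q hp hq => simp [add_comp, hp, hq, mul_add]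
  | monomial k a =>
    rw [← C_mul_X_pow_eq_monomial, mul_comp, C_comp, pow_comp, X_comp, neg_pow]
    have : (-1 : ℝ[X]) ^ k * X ^ k = C ((-1:ℝ)^k) * X ^ k := by
      simp [map_pow]
    rw [this, ← mul_assoc, ← map_mul, coeff_C_mul, coeff_C_mul, coeff_X_pow]
    rcases eq_or_ne n k with rfl | hnk
    · simp; ring
    · simp [if_neg hnk]

lemma nonzero_roots_bound (g : ℝ[X]) (hg : g ≠ 0) :
    {x : ℝ | x ≠ 0 ∧ g.IsRoot x}.ncard ≤ 2 * (g.support.card - 1) := by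
  set h := g.comp (-X) with hh
  have hhg : h.comp (-X) = g := by
    rw [hh, comp_assoc]
    simp
  have hne : h ≠ 0 := by
    intro h0
    rw [← hhg, h0, zero_comp] at hg
    exact hg rfl
  have hsupp : h.support.card ≤ g.support.card := by
    apply Finset.card_le_card
    intro n hn
    rw [mem_support_iff] at hn ⊢
    rw [hh, coeff_comp_neg_X] at hn
    intro hc; rw [hc, mul_zero] at hn; exact hn rfl
  -- negative roots of g correspond to positive roots of h
  have hneg : {x : ℝ | x < 0 ∧ g.IsRoot x} = Neg.neg '' {x : ℝ | 0 < x ∧ h.IsRoot x} := by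
    ext x
    simp only [Set.mem_image, Set.mem_setOf_eq]
    constructor
    · intro ⟨hx, hroot⟩
      refine ⟨-x, ⟨by linarith, ?_⟩, by ring⟩
      simp only [IsRoot, hh, eval_comp, eval_neg, eval_X]
      simpa using hroot
    · rintro ⟨y, ⟨hy, hroot⟩, rfl⟩
      refine ⟨by linarith, ?_⟩
      simp only [IsRoot, hh, eval_comp, eval_neg, eval_X] at hroot
      exact hroot
  have hsplit : {x : ℝ | x ≠ 0 ∧ g.IsRoot x} =
      {x : ℝ | 0 < x ∧ g.IsRoot x} ∪ {x : ℝ | x < 0 ∧ g.IsRoot x} := by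
    ext x
    simp only [Set.mem_setOf_eq, Set.mem_union]
    constructor
    · intro ⟨hx, hr⟩
      rcases hx.lt_or_gt with hlt | hgt
      · exact Or.inr ⟨hlt, hr⟩
      · exact Or.inl ⟨hgt, hr⟩
    · rintro (⟨hx, hr⟩ | ⟨hx, hr⟩) <;> exact ⟨by linarith, hr⟩
  have h1 := pos_roots_lt g hg
  have h2 := pos_roots_lt h hne
  have hnegcard : {x : ℝ | x < 0 ∧ g.IsRoot x}.ncard = {x : ℝ | 0 < x ∧ h.IsRoot x}.ncard := by
    rw [hneg]
    exact Set.ncard_image_of_injective _ neg_injective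
  calc {x : ℝ | x ≠ 0 ∧ g.IsRoot x}.ncard
      ≤ {x : ℝ | 0 < x ∧ g.IsRoot x}.ncard + {x : ℝ | x < 0 ∧ g.IsRoot x}.ncard := by
        rw [hsplit]; exact Set.ncard_union_le _ _
    _ ≤ 2 * (g.support.card - 1) := by rw [hnegcard]; omega

lemma edge_support (n1 n2 n3 : ℕ) (hn1 : 1 < n1) (hn12 : n1 < n2) (hn23 : n2 < n3)
    (A1 A2 A3 : ℝ[X]) (hA1 : A1 ≠ 0) (hA2 : A2 ≠ 0) (hA3 : A3 ≠ 0)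
    (r : ℕ) (hr : 1 ≤ r)
    (hadm : EdgeAdmissible n1 n2 n3 A1.natDegree A2.natDegree A3.natDegree r) :
    edgePoly n1 n2 n3 A1 A2 A3 r ≠ 0 ∧
    (edgePoly n1 n2 n3 A1 A2 A3 r).support.card ≤
      (Tie n1 n2 n3 A1.natDegree A2.natDegree A3.natDegree r).card := by
  set T := Tie n1 n2 n3 A1.natDegree A2.natDegree A3.natDegree r with hT
  set E := edgePoly n1 n2 n3 A1 A2 A3 r with hE
  have hcoeff : ∀ n : ℕ, E.coeff n =
      (if AbelIdx.I1 ∈ T then A1.leadingCoeff * (if n = n1 then 1 else 0) else 0) +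
      (if AbelIdx.I2 ∈ T then A2.leadingCoeff * (if n = n2 then 1 else 0) else 0) +
      (if AbelIdx.I3 ∈ T then A3.leadingCoeff * (if n = n3 then 1 else 0) else 0) +
      (if AbelIdx.D ∈ T then (r : ℝ) * (if 1 = n then 1 else 0) else 0) := by
    intro n
    have hrX : ((r : ℝ[X]) * X).coeff n = (r:ℝ) * (if 1 = n then 1 else 0) := by
      rw [← C_eq_natCast, coeff_C_mul, coeff_X]
    rw [hE, edgePoly, ← hT]
    simp only [coeff_add, apply_ite (fun f : ℝ[X] => f.coeff n), coeff_C_mul, coeff_X_pow,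
      coeff_zero, hrX]
  have hεdef : ∀ ℓ : AbelIdx, ∃ e : ℕ, (match ℓ with
      | AbelIdx.I1 => n1 | AbelIdx.I2 => n2 | AbelIdx.I3 => n3 | AbelIdx.D => 1) = e :=
    fun ℓ => ⟨_, rfl⟩
  have hmap : E.support ⊆ T.image (fun ℓ => match ℓ with
      | AbelIdx.I1 => n1 | AbelIdx.I2 => n2 | AbelIdx.I3 => n3 | AbelIdx.D => 1) := by
    intro n hn
    rw [mem_support_iff] at hn
    rw [Finset.mem_image]
    by_contra hcon
    push_neg at hcon
    apply hn
    rw [hcoeff n]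
    have z1 : (if AbelIdx.I1 ∈ T then A1.leadingCoeff * (if n = n1 then 1 else 0) else 0)
        = 0 := by
      split_ifs with h h'
      · exact absurd h'.symm (hcon AbelIdx.I1 h)
      · exact mul_zero _
      · rfl
    have z2 : (if AbelIdx.I2 ∈ T then A2.leadingCoeff * (if n = n2 then 1 else 0) else 0)
        = 0 := by
      split_ifs with h h'
      · exact absurd h'.symm (hcon AbelIdx.I2 h)
      · exact mul_zero _
      · rfl
    have z3 : (if AbelIdx.I3 ∈ T then A3.leadingCoeff * (if n = n3 then 1 else 0) else 0)
        = 0 := by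
      split_ifs with h h'
      · exact absurd h'.symm (hcon AbelIdx.I3 h)
      · exact mul_zero _
      · rfl
    have zd : (if AbelIdx.D ∈ T then (r : ℝ) * (if 1 = n then 1 else 0) else 0) = 0 := by
      split_ifs with h h'
      · exact absurd h' (hcon AbelIdx.D h)
      · exact mul_zero _
      · rfl
    rw [z1, z2, z3, zd]
    ring
  constructor
  · have hpos : 0 < T.card := by
      have h2 : 2 ≤ T.card := hadm
      omega
    obtain ⟨ℓ0, hℓ0⟩ := Finset.card_pos.mp hpos
    intro h0
    cases ℓ0 with
    | I1 =>
      have hc := hcoeff n1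
      rw [h0] at hc
      simp [hℓ0, (show ¬(n1 = n2) by omega), (show ¬(n1 = n3) by omega),
        (show ¬((1:ℕ) = n1) by omega)] at hc
      exact hA1 (leadingCoeff_eq_zero.mp hc.symm)
    | I2 =>
      have hc := hcoeff n2
      rw [h0] at hc
      simp [hℓ0, (show ¬(n2 = n1) by omega), (show ¬(n2 = n3) by omega),
        (show ¬((1:ℕ) = n2) by omega)] at hc
      exact hA2 (leadingCoeff_eq_zero.mp hc.symm)
    | I3 =>
      have hc := hcoeff n3
      rw [h0] at hc
      simp [hℓ0, (show ¬(n3 = n1) by omega), (show ¬(n3 = n2) by omega),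
        (show ¬((1:ℕ) = n3) by omega)] at hc
      exact hA3 (leadingCoeff_eq_zero.mp hc.symm)
    | D =>
      have hc := hcoeff 1
      rw [h0] at hc
      simp [hℓ0, (show ¬((1:ℕ) = n1) by omega), (show ¬((1:ℕ) = n2) by omega),
        (show ¬((1:ℕ) = n3) by omega)] at hc
      have : (r:ℝ) ≠ 0 := by
        simp only [ne_eq, Nat.cast_eq_zero]
        omega
      exact this hc.symm
  · exact (Finset.card_le_card hmap).trans (Finset.card_image_le)

/-- Corollary 3.8. Over `ℝ`, under the nondegeneracy assumptions at
an edge-admissible degree `r`, the number of solution denominators of degree `r`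
is at most `2·(|T_r| − 1)`. -/
theorem stmt6 (n1 n2 n3 : ℕ)
    (hn1 : 1 < n1) (hn12 : n1 < n2) (hn23 : n2 < n3)
    (A1 A2 A3 : Polynomial ℝ) (hA1 : A1 ≠ 0) (hA2 : A2 ≠ 0) (hA3 : A3 ≠ 0)
    (r : ℕ) (hr : 1 ≤ r)
    (hadm : EdgeAdmissible n1 n2 n3 A1.natDegree A2.natDegree A3.natDegree r)
    (hnd1 : ∀ c : ℝ, c ≠ 0 → (edgePoly n1 n2 n3 A1 A2 A3 r).IsRoot c →
      (Polynomial.derivative (edgePoly n1 n2 n3 A1 A2 A3 r)).eval c ≠ 0)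
    (hnd2 : AbelIdx.D ∈ Tie n1 n2 n3 A1.natDegree A2.natDegree A3.natDegree r →
      ∀ c : ℝ, c ≠ 0 → (edgePoly n1 n2 n3 A1 A2 A3 r).IsRoot c →
        ∀ m : ℕ, 1 ≤ m →
          (Polynomial.derivative (edgePoly n1 n2 n3 A1 A2 A3 r)).eval c + (m : ℝ) ≠ 0) :
    {p : Polynomial ℝ | IsSolDen n1 n2 n3 A1 A2 A3 p ∧ p.natDegree = r}.Finite ∧
    {p : Polynomial ℝ | IsSolDen n1 n2 n3 A1 A2 A3 p ∧ p.natDegree = r}.ncard ≤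
      2 * ((Tie n1 n2 n3 A1.natDegree A2.natDegree A3.natDegree r).card - 1) := by
  set S := {p : Polynomial ℝ | IsSolDen n1 n2 n3 A1 A2 A3 p ∧ p.natDegree = r} with hS
  set E := edgePoly n1 n2 n3 A1 A2 A3 r with hE
  set T := Tie n1 n2 n3 A1.natDegree A2.natDegree A3.natDegree r with hT
  obtain ⟨hEne, hsupp⟩ := edge_support n1 n2 n3 hn1 hn12 hn23 A1 A2 A3 hA1 hA2 hA3 r hr hadm
  rw [← hE, ← hT] at hsupp
  rw [← hE] at hEne
  set Z := {x : ℝ | x ≠ 0 ∧ E.IsRoot x} with hZ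
  have hZfin : Z.Finite := (E.finite_setOf_isRoot hEne).subset (fun x hx => hx.2)
  have hmapsto : ∀ p ∈ S, (p.leadingCoeff)⁻¹ ∈ Z := by
    intro p hp
    obtain ⟨hsol, hdeg⟩ := hp
    have hγ : p.leadingCoeff ≠ 0 := leadingCoeff_ne_zero.mpr hsol.1
    exact ⟨inv_ne_zero hγ, partA n1 n2 n3 hn1 hn12 hn23 A1 A2 A3 hA1 hA2 hA3 r hr p hsol hdeg⟩
  have hinj : Set.InjOn (fun p : ℝ[X] => (p.leadingCoeff)⁻¹) S := by
    intro p hp q hq hfeq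
    obtain ⟨hsolp, hdegp⟩ := hp
    obtain ⟨hsolq, hdegq⟩ := hq
    have hγp : p.leadingCoeff ≠ 0 := leadingCoeff_ne_zero.mpr hsolp.1
    have hγq : q.leadingCoeff ≠ 0 := leadingCoeff_ne_zero.mpr hsolq.1
    have hlead : q.leadingCoeff = p.leadingCoeff := by
      have := congrArg (fun x : ℝ => x⁻¹) hfeq
      simpa [inv_inv] using this.symm
    by_contra hne
    exact partA' n1 n2 n3 hn1 hn12 hn23 A1 A2 A3 hA1 hA2 hA3 r hr hnd1 hnd2
      p q hsolp hsolq hdegp hdegq hlead hne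
  have himg : (fun p : ℝ[X] => (p.leadingCoeff)⁻¹) '' S ⊆ Z := by
    rintro x ⟨p, hp, rfl⟩
    exact hmapsto p hp
  have hSfin : S.Finite := Set.Finite.of_finite_image (hZfin.subset himg) hinj
  refine ⟨hSfin, ?_⟩
  have hcard1 : S.ncard = ((fun p : ℝ[X] => (p.leadingCoeff)⁻¹) '' S).ncard :=
    (Set.ncard_image_of_injOn hinj).symm
  have hcard2 : ((fun p : ℝ[X] => (p.leadingCoeff)⁻¹) '' S).ncard ≤ Z.ncard :=
    Set.ncard_le_ncard himg hZfin
  have hcard3 : Z.ncard ≤ 2 * (E.support.card - 1) := nonzero_roots_bound E hEne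
  have : 2 * (E.support.card - 1) ≤ 2 * (T.card - 1) := by
    have := hsupp
    omega
  omega
end

section
/- Assume (ND). If p is a solution denominator with r := deg p ≥ 1, then r ∈ Γ and T_r is one of the eight sets {3,2}, {3,2,1}, {3,2,∂}, {3,2,1,∂}, {3,1}, {3,1,∂}, {2,1}, {2,1,∂}; in particular T_r is none of {3,∂}, {2,∂}, {1,∂}. -/
open Polynomial

private lemma min4_choice (a b c e : ℤ) :
    min (min a b) (min c e) = a ∨ min (min a b) (min c e) = b ∨
    min (min a b) (min c e) = c ∨ min (min a b) (min c e) = e := by omega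

private lemma coeff_ite_aux {𝕜 : Type*} [Field 𝕜] (q : Polynomial 𝕜) (d : ℕ) (φ O : ℤ)
    (hle : O ≤ φ) (hdeg : (q.natDegree : ℤ) + φ = (d : ℤ) + O) :
    q.coeff d = if φ = O then q.leadingCoeff else 0 := by
  split_ifs with h
  · have hnd : q.natDegree = d := by omega
    rw [← hnd, coeff_natDegree]
  · have hlt : q.natDegree < d := by omega
    exact coeff_eq_zero_of_natDegree_lt hlt

private lemma nd2_contra {𝕜 : Type*} [Field 𝕜] [CharZero 𝕜] (r ni : ℕ) (hr : 1 ≤ r)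
    (hni : 2 ≤ ni) (α L : 𝕜) (hL : L ≠ 0) (hα : α = -((r : 𝕜) * L ^ (ni - 1)))
    (h : ∀ c : 𝕜, c ≠ 0 →
      (Polynomial.C α * Polynomial.X ^ ni + (r : Polynomial 𝕜) * Polynomial.X).IsRoot c →
      ∀ m : ℕ, 1 ≤ m →
        (Polynomial.derivative
          (Polynomial.C α * Polynomial.X ^ ni + (r : Polynomial 𝕜) * Polynomial.X)).eval c
          + (m : 𝕜) ≠ 0) : False := by
  have hC : (L⁻¹ : 𝕜) ≠ 0 := inv_ne_zero hL
  have hcan : L ^ (ni - 1) * (L⁻¹) ^ (ni - 1) = 1 := by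
    rw [← mul_pow, mul_inv_cancel₀ hL, one_pow]
  have hxp : (L⁻¹ : 𝕜) ^ ni = (L⁻¹) ^ (ni - 1) * L⁻¹ := by
    rw [← pow_succ]; congr 1; omega
  have hroot : (Polynomial.C α * Polynomial.X ^ ni + (r : Polynomial 𝕜) *
      Polynomial.X).IsRoot L⁻¹ := by
    simp only [IsRoot, eval_add, eval_mul, eval_pow, eval_C, eval_X, eval_natCast, hα, hxp]
    calc -((r : 𝕜) * L ^ (ni - 1)) * ((L⁻¹) ^ (ni - 1) * L⁻¹) + (r : 𝕜) * L⁻¹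
        = -((r : 𝕜) * (L ^ (ni - 1) * (L⁻¹) ^ (ni - 1)) * L⁻¹) + (r : 𝕜) * L⁻¹ := by ring
      _ = 0 := by rw [hcan]; ring
  have hder : (Polynomial.derivative
      (Polynomial.C α * Polynomial.X ^ ni + (r : Polynomial 𝕜) * Polynomial.X)).eval L⁻¹
      = (r : 𝕜) - (ni : 𝕜) * (r : 𝕜) := by
    simp only [derivative_add, derivative_mul, derivative_C, derivative_X_pow, derivative_X,
      derivative_natCast, zero_mul, zero_add, mul_one, add_zero, eval_add, eval_mul, eval_pow,
      eval_C, eval_X, eval_natCast, eval_one, hα]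
    calc -((r : 𝕜) * L ^ (ni - 1)) * ((ni : 𝕜) * (L⁻¹) ^ (ni - 1)) + (r : 𝕜)
        = -((ni : 𝕜) * (r : 𝕜) * (L ^ (ni - 1) * (L⁻¹) ^ (ni - 1))) + (r : 𝕜) := by ring
      _ = (r : 𝕜) - (ni : 𝕜) * (r : 𝕜) := by rw [hcan]; ring
  refine h L⁻¹ hC hroot (r * (ni - 1))
    (Nat.one_le_iff_ne_zero.mpr (Nat.mul_ne_zero (by omega) (by omega))) ?_
  rw [hder]
  push_cast [Nat.cast_sub (by omega : 1 ≤ ni)]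
  ring
/-- Proposition 4.6. Under (ND), the degree of any solution
denominator lies in `Γ`, and the tie set is one of the eight admissible configurations;
in particular it is none of `{3,∂}`, `{2,∂}`, `{1,∂}`. -/
theorem stmt7 {𝕜 : Type*} [RCLike 𝕜] (n1 n2 n3 : ℕ)
    (hn1 : 1 < n1) (hn12 : n1 < n2) (hn23 : n2 < n3)
    (A1 A2 A3 : Polynomial 𝕜) (hA1 : A1 ≠ 0) (hA2 : A2 ≠ 0) (hA3 : A3 ≠ 0)
    (hND : ND n1 n2 n3 A1 A2 A3)
    (p : Polynomial 𝕜) (hp : IsSolDen n1 n2 n3 A1 A2 A3 p) (hdeg : 1 ≤ p.natDegree) :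
    p.natDegree ∈ Gamma n1 n2 n3 A1.natDegree A2.natDegree A3.natDegree ∧
    (Tie n1 n2 n3 A1.natDegree A2.natDegree A3.natDegree p.natDegree =
        {AbelIdx.I3, AbelIdx.I2} ∨
     Tie n1 n2 n3 A1.natDegree A2.natDegree A3.natDegree p.natDegree =
        {AbelIdx.I3, AbelIdx.I2, AbelIdx.I1} ∨
     Tie n1 n2 n3 A1.natDegree A2.natDegree A3.natDegree p.natDegree =
        {AbelIdx.I3, AbelIdx.I2, AbelIdx.D} ∨
     Tie n1 n2 n3 A1.natDegree A2.natDegree A3.natDegree p.natDegree =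
        {AbelIdx.I3, AbelIdx.I2, AbelIdx.I1, AbelIdx.D} ∨
     Tie n1 n2 n3 A1.natDegree A2.natDegree A3.natDegree p.natDegree =
        {AbelIdx.I3, AbelIdx.I1} ∨
     Tie n1 n2 n3 A1.natDegree A2.natDegree A3.natDegree p.natDegree =
        {AbelIdx.I3, AbelIdx.I1, AbelIdx.D} ∨
     Tie n1 n2 n3 A1.natDegree A2.natDegree A3.natDegree p.natDegree =
        {AbelIdx.I2, AbelIdx.I1} ∨
     Tie n1 n2 n3 A1.natDegree A2.natDegree A3.natDegree p.natDegree =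
        {AbelIdx.I2, AbelIdx.I1, AbelIdx.D}) := by
  obtain ⟨hp0, heq⟩ := hp
  set r := p.natDegree with hrdef
  have hr1 : 1 ≤ r := hdeg
  have hrK : ((r : 𝕜)) ≠ 0 := Nat.cast_ne_zero.mpr (by omega)
  have hL : p.leadingCoeff ≠ 0 := leadingCoeff_ne_zero.mpr hp0
  set L := p.leadingCoeff with hLdef
  -- derivative facts
  have hdc : (derivative p).coeff (r - 1) = L * r := by
    rw [coeff_derivative, Nat.sub_add_cancel hr1]
    have h1 : ((r - 1 : ℕ) : 𝕜) + 1 = (r : 𝕜) := by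
      push_cast [Nat.cast_sub hr1]; ring
    rw [h1, hrdef, coeff_natDegree]
  have hd0 : derivative p ≠ 0 := by
    intro h
    rw [h, coeff_zero] at hdc
    exact mul_ne_zero hL hrK hdc.symm
  have hdn : (derivative p).natDegree = r - 1 :=
    le_antisymm (natDegree_derivative_le p)
      (le_natDegree_of_ne_zero (by rw [hdc]; exact mul_ne_zero hL hrK))
  have hdl : (derivative p).leadingCoeff = L * r := by
    rw [Polynomial.leadingCoeff, hdn, hdc]
  -- term degrees and leading coefficients
  have htDdeg : (p ^ (n3 - 2) * derivative p).natDegree = (n3 - 2) * r + (r - 1) := by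
    rw [natDegree_mul (pow_ne_zero _ hp0) hd0, natDegree_pow, hdn]
  have htDlc : (p ^ (n3 - 2) * derivative p).leadingCoeff = L ^ (n3 - 2) * (L * r) := by
    rw [leadingCoeff_mul, leadingCoeff_pow, hdl]
  have ht2deg : (A2 * p ^ (n3 - n2)).natDegree = A2.natDegree + (n3 - n2) * r := by
    rw [natDegree_mul hA2 (pow_ne_zero _ hp0), natDegree_pow]
  have ht2lc : (A2 * p ^ (n3 - n2)).leadingCoeff = A2.leadingCoeff * L ^ (n3 - n2) := by
    rw [leadingCoeff_mul, leadingCoeff_pow]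
  have ht1deg : (A1 * p ^ (n3 - n1)).natDegree = A1.natDegree + (n3 - n1) * r := by
    rw [natDegree_mul hA1 (pow_ne_zero _ hp0), natDegree_pow]
  have ht1lc : (A1 * p ^ (n3 - n1)).leadingCoeff = A1.leadingCoeff * L ^ (n3 - n1) := by
    rw [leadingCoeff_mul, leadingCoeff_pow]
  -- the inequality (n3 - n2) * r ≤ a3
  have hsplit3 : p ^ (n3 - 2) = p ^ (n3 - n2) * p ^ (n2 - 2) := by
    rw [← pow_add]; congr 1; omega
  have hsplit1 : p ^ (n3 - n1) = p ^ (n3 - n2) * p ^ (n2 - n1) := by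
    rw [← pow_add]; congr 1; omega
  have hA3eq : A3 = -(p ^ (n3 - n2) *
      (p ^ (n2 - 2) * derivative p + A2 + A1 * p ^ (n2 - n1))) := by
    linear_combination heq - derivative p * hsplit3 - A1 * hsplit1
  have hQ0 : p ^ (n2 - 2) * derivative p + A2 + A1 * p ^ (n2 - n1) ≠ 0 := by
    intro h
    rw [h, mul_zero, neg_zero] at hA3eq
    exact hA3 hA3eq
  have hdeg3 : A3.natDegree = (n3 - n2) * r +
      (p ^ (n2 - 2) * derivative p + A2 + A1 * p ^ (n2 - n1)).natDegree := by
    rw [hA3eq, natDegree_neg, natDegree_mul (pow_ne_zero _ hp0) hQ0, natDegree_pow]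
  have hineq : ((n3 : ℤ) - n2) * r ≤ (A3.natDegree : ℤ) := by
    rw [hdeg3]
    push_cast [Nat.cast_sub hn23.le]
    have := Int.natCast_nonneg
      ((p ^ (n2 - 2) * derivative p + A2 + A1 * p ^ (n2 - n1)).natDegree)
    linarith
  -- Phi reduction lemmas
  have hPhi1 : Phi n1 n2 n3 A1.natDegree A2.natDegree A3.natDegree r AbelIdx.I1 = (n1 : ℤ) * r - A1.natDegree := rfl
  have hPhi2 : Phi n1 n2 n3 A1.natDegree A2.natDegree A3.natDegree r AbelIdx.I2 = (n2 : ℤ) * r - A2.natDegree := rfl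
  have hPhi3 : Phi n1 n2 n3 A1.natDegree A2.natDegree A3.natDegree r AbelIdx.I3 = (n3 : ℤ) * r - A3.natDegree := rfl
  have hPhiD : Phi n1 n2 n3 A1.natDegree A2.natDegree A3.natDegree r AbelIdx.D = (r : ℤ) + 1 := rfl
  have hOle : ∀ ℓ, Omin n1 n2 n3 A1.natDegree A2.natDegree A3.natDegree r ≤ Phi n1 n2 n3 A1.natDegree A2.natDegree A3.natDegree r ℓ := by
    intro ℓ
    cases ℓ
    · exact le_trans (min_le_left _ _) (min_le_left _ _)
    · exact le_trans (min_le_left _ _) (min_le_right _ _)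
    · exact le_trans (min_le_right _ _) (min_le_left _ _)
    · exact le_trans (min_le_right _ _) (min_le_right _ _)
  have hO4 : (0 : ℤ) ≤ (n3 : ℤ) * r - Omin n1 n2 n3 A1.natDegree A2.natDegree A3.natDegree r := by
    have h := hOle AbelIdx.D
    rw [hPhiD] at h
    have h2 : (2 : ℤ) ≤ (n3 : ℤ) := by exact_mod_cast (by omega : 2 ≤ n3)
    have hr' : (1 : ℤ) ≤ (r : ℤ) := by exact_mod_cast hr1
    nlinarith
  obtain ⟨d, hd⟩ : ∃ d : ℕ, (d : ℤ) = (n3 : ℤ) * r - Omin n1 n2 n3 A1.natDegree A2.natDegree A3.natDegree r := ⟨_, Int.toNat_of_nonneg hO4⟩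
  -- coefficient extraction at degree d
  have hcD : (p ^ (n3 - 2) * derivative p).coeff d =
      (if Phi n1 n2 n3 A1.natDegree A2.natDegree A3.natDegree r AbelIdx.D = Omin n1 n2 n3 A1.natDegree A2.natDegree A3.natDegree r then L ^ (n3 - 2) * (L * (r : 𝕜)) else 0) := by
    rw [← htDlc]
    refine coeff_ite_aux _ _ _ _ (hOle _) ?_
    rw [htDdeg, hPhiD]
    push_cast [Nat.cast_sub (by omega : 2 ≤ n3), Nat.cast_sub hr1]
    linear_combination (-1 : ℤ) * hd
  have hc3 : A3.coeff d = (if Phi n1 n2 n3 A1.natDegree A2.natDegree A3.natDegree r AbelIdx.I3 = Omin n1 n2 n3 A1.natDegree A2.natDegree A3.natDegree r then A3.leadingCoeff else 0) := by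
    refine coeff_ite_aux _ _ _ _ (hOle _) ?_
    rw [hPhi3]
    linear_combination (-1 : ℤ) * hd
  have hc2 : (A2 * p ^ (n3 - n2)).coeff d =
      (if Phi n1 n2 n3 A1.natDegree A2.natDegree A3.natDegree r AbelIdx.I2 = Omin n1 n2 n3 A1.natDegree A2.natDegree A3.natDegree r then A2.leadingCoeff * L ^ (n3 - n2) else 0) := by
    rw [← ht2lc]
    refine coeff_ite_aux _ _ _ _ (hOle _) ?_
    rw [ht2deg, hPhi2]
    push_cast [Nat.cast_sub hn23.le]
    linear_combination (-1 : ℤ) * hd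
  have hc1 : (A1 * p ^ (n3 - n1)).coeff d =
      (if Phi n1 n2 n3 A1.natDegree A2.natDegree A3.natDegree r AbelIdx.I1 = Omin n1 n2 n3 A1.natDegree A2.natDegree A3.natDegree r then A1.leadingCoeff * L ^ (n3 - n1) else 0) := by
    rw [← ht1lc]
    refine coeff_ite_aux _ _ _ _ (hOle _) ?_
    rw [ht1deg, hPhi1]
    push_cast [Nat.cast_sub (by omega : n1 ≤ n3)]
    linear_combination (-1 : ℤ) * hd
  have hsum : (if Phi n1 n2 n3 A1.natDegree A2.natDegree A3.natDegree r AbelIdx.D = Omin n1 n2 n3 A1.natDegree A2.natDegree A3.natDegree r then L ^ (n3 - 2) * (L * (r : 𝕜)) else 0)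
      + (if Phi n1 n2 n3 A1.natDegree A2.natDegree A3.natDegree r AbelIdx.I3 = Omin n1 n2 n3 A1.natDegree A2.natDegree A3.natDegree r then A3.leadingCoeff else 0)
      + (if Phi n1 n2 n3 A1.natDegree A2.natDegree A3.natDegree r AbelIdx.I2 = Omin n1 n2 n3 A1.natDegree A2.natDegree A3.natDegree r then A2.leadingCoeff * L ^ (n3 - n2) else 0)
      + (if Phi n1 n2 n3 A1.natDegree A2.natDegree A3.natDegree r AbelIdx.I1 = Omin n1 n2 n3 A1.natDegree A2.natDegree A3.natDegree r then A1.leadingCoeff * L ^ (n3 - n1) else 0) = 0 := by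
    rw [← hcD, ← hc3, ← hc2, ← hc1, ← coeff_add, ← coeff_add, ← coeff_add, heq, coeff_zero]
  have memTie : ∀ ℓ, ℓ ∈ Tie n1 n2 n3 A1.natDegree A2.natDegree A3.natDegree r ↔ Phi n1 n2 n3 A1.natDegree A2.natDegree A3.natDegree r ℓ = Omin n1 n2 n3 A1.natDegree A2.natDegree A3.natDegree r := by
    intro ℓ; simp [Tie]
  by_cases h3 : Phi n1 n2 n3 A1.natDegree A2.natDegree A3.natDegree r AbelIdx.I3 = Omin n1 n2 n3 A1.natDegree A2.natDegree A3.natDegree r <;> by_cases h2 : Phi n1 n2 n3 A1.natDegree A2.natDegree A3.natDegree r AbelIdx.I2 = Omin n1 n2 n3 A1.natDegree A2.natDegree A3.natDegree r <;>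
    by_cases h1 : Phi n1 n2 n3 A1.natDegree A2.natDegree A3.natDegree r AbelIdx.I1 = Omin n1 n2 n3 A1.natDegree A2.natDegree A3.natDegree r <;> by_cases hDD : Phi n1 n2 n3 A1.natDegree A2.natDegree A3.natDegree r AbelIdx.D = Omin n1 n2 n3 A1.natDegree A2.natDegree A3.natDegree r
  · -- {3,2,1,D}
    refine ⟨⟨hr1, hineq, Or.inl ?_⟩, Or.inr (Or.inr (Or.inr (Or.inl ?_)))⟩
    · have e3 := h3; rw [hPhi3] at e3
      have e2 := h2; rw [hPhi2] at e2
      linear_combination e3 - e2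
    · ext ℓ; cases ℓ <;> simp [memTie, h1, h2, h3, hDD]
  · -- {3,2,1}
    refine ⟨⟨hr1, hineq, Or.inl ?_⟩, Or.inr (Or.inl ?_)⟩
    · have e3 := h3; rw [hPhi3] at e3
      have e2 := h2; rw [hPhi2] at e2
      linear_combination e3 - e2
    · ext ℓ; cases ℓ <;> simp [memTie, h1, h2, h3, hDD]
  · -- {3,2,D}
    refine ⟨⟨hr1, hineq, Or.inl ?_⟩, Or.inr (Or.inr (Or.inl ?_))⟩
    · have e3 := h3; rw [hPhi3] at e3
      have e2 := h2; rw [hPhi2] at e2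
      linear_combination e3 - e2
    · ext ℓ; cases ℓ <;> simp [memTie, h1, h2, h3, hDD]
  · -- {3,2}
    refine ⟨⟨hr1, hineq, Or.inl ?_⟩, Or.inl ?_⟩
    · have e3 := h3; rw [hPhi3] at e3
      have e2 := h2; rw [hPhi2] at e2
      linear_combination e3 - e2
    · ext ℓ; cases ℓ <;> simp [memTie, h1, h2, h3, hDD]
  · -- {3,1,D}
    refine ⟨⟨hr1, hineq, Or.inr (Or.inl ?_)⟩,
      Or.inr (Or.inr (Or.inr (Or.inr (Or.inr (Or.inl ?_)))))⟩
    · have e3 := h3; rw [hPhi3] at e3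
      have e1 := h1; rw [hPhi1] at e1
      linear_combination e3 - e1
    · ext ℓ; cases ℓ <;> simp [memTie, h1, h2, h3, hDD]
  · -- {3,1}
    refine ⟨⟨hr1, hineq, Or.inr (Or.inl ?_)⟩,
      Or.inr (Or.inr (Or.inr (Or.inr (Or.inl ?_))))⟩
    · have e3 := h3; rw [hPhi3] at e3
      have e1 := h1; rw [hPhi1] at e1
      linear_combination e3 - e1
    · ext ℓ; cases ℓ <;> simp [memTie, h1, h2, h3, hDD]
  · -- {3,D} : contradiction via (ND2)
    exfalso
    simp only [if_pos h3, if_pos hDD, if_neg h2, if_neg h1, add_zero, zero_add] at hsum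
    have epow : L ^ (n3 - 2) * L = L ^ (n3 - 1) := by
      rw [← pow_succ]; congr 1; omega
    have hal : A3.leadingCoeff = -((r : 𝕜) * L ^ (n3 - 1)) := by
      linear_combination hsum - (r : 𝕜) * epow
    have e3 := h3; rw [hPhi3] at e3
    have eD := hDD; rw [hPhiD] at eD
    have hG : r ∈ Gamma n1 n2 n3 A1.natDegree A2.natDegree A3.natDegree :=
      ⟨hr1, hineq, Or.inr (Or.inr (Or.inr (Or.inl (by linear_combination e3 - eD))))⟩
    have hT : Tie n1 n2 n3 A1.natDegree A2.natDegree A3.natDegree r = {AbelIdx.I3, AbelIdx.D} := by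
      ext ℓ; cases ℓ <;> simp [memTie, h1, h2, h3, hDD]
    have hEA : EdgeAdmissible n1 n2 n3 A1.natDegree A2.natDegree A3.natDegree r := by
      show 2 ≤ (Tie n1 n2 n3 A1.natDegree A2.natDegree A3.natDegree r).card
      rw [hT]; decide
    obtain ⟨-, nd2, -⟩ := hND r hG hEA
    have hEP : edgePoly n1 n2 n3 A1 A2 A3 r =
        Polynomial.C A3.leadingCoeff * Polynomial.X ^ n3
          + (r : Polynomial 𝕜) * Polynomial.X := by
      unfold edgePoly
      rw [hT, if_neg (by decide), if_neg (by decide), if_pos (by decide), if_pos (by decide)]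
      ring
    rw [hEP] at nd2
    exact nd2_contra r n3 hr1 (by omega) _ L hL hal (nd2 ((memTie AbelIdx.D).mpr hDD))
  · -- {3} alone: impossible
    exfalso
    simp only [if_pos h3, if_neg hDD, if_neg h2, if_neg h1, add_zero, zero_add] at hsum
    exact absurd hsum (leadingCoeff_ne_zero.mpr hA3)
  · -- {2,1,D}
    refine ⟨⟨hr1, hineq, Or.inr (Or.inr (Or.inl ?_))⟩,
      Or.inr (Or.inr (Or.inr (Or.inr (Or.inr (Or.inr (Or.inr ?_))))))⟩
    · have e2 := h2; rw [hPhi2] at e2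
      have e1 := h1; rw [hPhi1] at e1
      linear_combination e2 - e1
    · ext ℓ; cases ℓ <;> simp [memTie, h1, h2, h3, hDD]
  · -- {2,1}
    refine ⟨⟨hr1, hineq, Or.inr (Or.inr (Or.inl ?_))⟩,
      Or.inr (Or.inr (Or.inr (Or.inr (Or.inr (Or.inr (Or.inl ?_))))))⟩
    · have e2 := h2; rw [hPhi2] at e2
      have e1 := h1; rw [hPhi1] at e1
      linear_combination e2 - e1
    · ext ℓ; cases ℓ <;> simp [memTie, h1, h2, h3, hDD]
  · -- {2,D} : contradiction via (ND2)
    exfalso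
    simp only [if_pos h2, if_pos hDD, if_neg h3, if_neg h1, add_zero, zero_add] at hsum
    have epow : L ^ (n3 - 2) * L = L ^ (n3 - n2) * L ^ (n2 - 1) := by
      rw [← pow_succ, ← pow_add]; congr 1; omega
    have key : L ^ (n3 - n2) * (A2.leadingCoeff + (r : 𝕜) * L ^ (n2 - 1)) = 0 := by
      linear_combination hsum - (r : 𝕜) * epow
    have hal : A2.leadingCoeff = -((r : 𝕜) * L ^ (n2 - 1)) := by
      have h0 := (mul_eq_zero.mp key).resolve_left (pow_ne_zero _ hL)
      linear_combination h0
    have e2 := h2; rw [hPhi2] at e2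
    have eD := hDD; rw [hPhiD] at eD
    have hG : r ∈ Gamma n1 n2 n3 A1.natDegree A2.natDegree A3.natDegree :=
      ⟨hr1, hineq, Or.inr (Or.inr (Or.inr (Or.inr (Or.inl (by linear_combination e2 - eD)))))⟩
    have hT : Tie n1 n2 n3 A1.natDegree A2.natDegree A3.natDegree r = {AbelIdx.I2, AbelIdx.D} := by
      ext ℓ; cases ℓ <;> simp [memTie, h1, h2, h3, hDD]
    have hEA : EdgeAdmissible n1 n2 n3 A1.natDegree A2.natDegree A3.natDegree r := by
      show 2 ≤ (Tie n1 n2 n3 A1.natDegree A2.natDegree A3.natDegree r).card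
      rw [hT]; decide
    obtain ⟨-, nd2, -⟩ := hND r hG hEA
    have hEP : edgePoly n1 n2 n3 A1 A2 A3 r =
        Polynomial.C A2.leadingCoeff * Polynomial.X ^ n2
          + (r : Polynomial 𝕜) * Polynomial.X := by
      unfold edgePoly
      rw [hT, if_neg (by decide), if_pos (by decide), if_neg (by decide), if_pos (by decide)]
      ring
    rw [hEP] at nd2
    exact nd2_contra r n2 hr1 (by omega) _ L hL hal (nd2 ((memTie AbelIdx.D).mpr hDD))
  · -- {2} alone: impossible
    exfalso
    simp only [if_pos h2, if_neg hDD, if_neg h3, if_neg h1, add_zero, zero_add] at hsum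
    exact absurd hsum (mul_ne_zero (leadingCoeff_ne_zero.mpr hA2) (pow_ne_zero _ hL))
  · -- {1,D} : contradiction via (ND2)
    exfalso
    simp only [if_pos h1, if_pos hDD, if_neg h3, if_neg h2, add_zero, zero_add] at hsum
    have epow : L ^ (n3 - 2) * L = L ^ (n3 - n1) * L ^ (n1 - 1) := by
      rw [← pow_succ, ← pow_add]; congr 1; omega
    have key : L ^ (n3 - n1) * (A1.leadingCoeff + (r : 𝕜) * L ^ (n1 - 1)) = 0 := by
      linear_combination hsum - (r : 𝕜) * epow
    have hal : A1.leadingCoeff = -((r : 𝕜) * L ^ (n1 - 1)) := by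
      have h0 := (mul_eq_zero.mp key).resolve_left (pow_ne_zero _ hL)
      linear_combination h0
    have e1 := h1; rw [hPhi1] at e1
    have eD := hDD; rw [hPhiD] at eD
    have hG : r ∈ Gamma n1 n2 n3 A1.natDegree A2.natDegree A3.natDegree :=
      ⟨hr1, hineq,
        Or.inr (Or.inr (Or.inr (Or.inr (Or.inr (by linear_combination e1 - eD)))))⟩
    have hT : Tie n1 n2 n3 A1.natDegree A2.natDegree A3.natDegree r = {AbelIdx.I1, AbelIdx.D} := by
      ext ℓ; cases ℓ <;> simp [memTie, h1, h2, h3, hDD]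
    have hEA : EdgeAdmissible n1 n2 n3 A1.natDegree A2.natDegree A3.natDegree r := by
      show 2 ≤ (Tie n1 n2 n3 A1.natDegree A2.natDegree A3.natDegree r).card
      rw [hT]; decide
    obtain ⟨-, nd2, -⟩ := hND r hG hEA
    have hEP : edgePoly n1 n2 n3 A1 A2 A3 r =
        Polynomial.C A1.leadingCoeff * Polynomial.X ^ n1
          + (r : Polynomial 𝕜) * Polynomial.X := by
      unfold edgePoly
      rw [hT, if_pos (by decide), if_neg (by decide), if_neg (by decide), if_pos (by decide)]
      ring
    rw [hEP] at nd2
    exact nd2_contra r n1 hr1 (by omega) _ L hL hal (nd2 ((memTie AbelIdx.D).mpr hDD))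
  · -- {1} alone: impossible
    exfalso
    simp only [if_pos h1, if_neg hDD, if_neg h3, if_neg h2, add_zero, zero_add] at hsum
    exact absurd hsum (mul_ne_zero (leadingCoeff_ne_zero.mpr hA1) (pow_ne_zero _ hL))
  · -- {D} alone: impossible
    exfalso
    simp only [if_pos hDD, if_neg h3, if_neg h2, if_neg h1, add_zero, zero_add] at hsum
    exact absurd hsum (mul_ne_zero (pow_ne_zero _ hL) (mul_ne_zero hL hrK))
  · -- empty: impossible
    exfalso
    rcases min4_choice (Phi n1 n2 n3 A1.natDegree A2.natDegree A3.natDegree r AbelIdx.I1) (Phi n1 n2 n3 A1.natDegree A2.natDegree A3.natDegree r AbelIdx.I2) (Phi n1 n2 n3 A1.natDegree A2.natDegree A3.natDegree r AbelIdx.I3) (Phi n1 n2 n3 A1.natDegree A2.natDegree A3.natDegree r AbelIdx.D)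
      with h | h | h | h
    exacts [h1 h.symm, h2 h.symm, h3 h.symm, hDD h.symm]
end
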